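/- arXiv:1703.03852 — 8 statements merged into one kernel-verified Lean document; each statement's English description precedes it below -/
import Mathlib

section
/- In a graph G with all degrees D(x) satisfying 3 ≤ D(x) ≤ D, for any two oriented edges e, e' with t(e) = t(e'), the matrix entry of S*²S² satisfies (S*²S²)(e,e') ≥ (D(t(e)) − 2)·(D−1)^{−4} ≥ (D−1)^{−4}. -/
open Finset Matrix

/-- The matrix (real entries) of the non-backtracking transfer operator `S`,
acting by `(Smat *ᵥ f) e = (1/(D(o(e))-1)) ∑_{e' ⇝ e} f e'`. -/
noncomputable def Smat {V : Type*} [Fintype V] [DecidableEq V]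
    (G : SimpleGraph V) [DecidableRel G.Adj] : Matrix G.Dart G.Dart ℝ :=
  fun e e' => if e'.snd = e.fst ∧ e'.symm ≠ e then ((G.degree e.fst : ℝ) - 1)⁻¹ else 0

/-- The matrix of `S*²S²`, `S*` being the `ℓ²(B)`-adjoint (transpose) of `S`. -/
noncomputable def SstarSqSq {V : Type*} [Fintype V] [DecidableEq V]
    (G : SimpleGraph V) [DecidableRel G.Adj] : Matrix G.Dart G.Dart ℝ :=
  (Smat G)ᵀ * (Smat G)ᵀ * (Smat G * Smat G)

section Aux
variable {V : Type*} [Fintype V] [DecidableEq V]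
    (G : SimpleGraph V) [DecidableRel G.Adj] (D : ℕ)
    (hdeg : ∀ x : V, 3 ≤ G.degree x ∧ G.degree x ≤ D)

include hdeg

lemma Smat_nonneg' (e e' : G.Dart) : 0 ≤ Smat G e e' := by
  unfold Smat
  split
  · have h := (hdeg e.fst).1
    have : (3:ℝ) ≤ (G.degree e.fst : ℝ) := by exact_mod_cast h
    exact inv_nonneg.mpr (by linarith)
  · exact le_refl 0

lemma Smat_lb (e e' : G.Dart) (h1 : e'.snd = e.fst) (h2 : e'.symm ≠ e) :
    ((D : ℝ) - 1)⁻¹ ≤ Smat G e e' := by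
  unfold Smat
  rw [if_pos ⟨h1, h2⟩]
  have h3 := (hdeg e.fst).1
  have h4 := (hdeg e.fst).2
  have h3' : (3:ℝ) ≤ (G.degree e.fst : ℝ) := by exact_mod_cast h3
  have h4' : (G.degree e.fst : ℝ) ≤ (D : ℝ) := by exact_mod_cast h4
  have hpos : (0:ℝ) < (G.degree e.fst : ℝ) - 1 := by linarith
  exact inv_anti₀ hpos (by linarith)

lemma T_nonneg (a e : G.Dart) : 0 ≤ (Smat G * Smat G) a e := by
  rw [mul_apply]
  exact Finset.sum_nonneg fun c _ =>
    mul_nonneg (Smat_nonneg' G D hdeg a c) (Smat_nonneg' G D hdeg c e)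

lemma T_lb (e b a : G.Dart) (h1 : e.snd = b.fst) (h2 : e.symm ≠ b)
    (h3 : b.snd = a.fst) (h4 : b.symm ≠ a) :
    ((D : ℝ) - 1)⁻¹ * ((D : ℝ) - 1)⁻¹ ≤ (Smat G * Smat G) a e := by
  rw [mul_apply]
  have key : ((D : ℝ) - 1)⁻¹ * ((D : ℝ) - 1)⁻¹ ≤ Smat G a b * Smat G b e := by
    have hD : (0:ℝ) ≤ ((D : ℝ) - 1)⁻¹ := by
      have h3 := (hdeg a.fst).1
      have h4 := (hdeg a.fst).2
      have : (3:ℝ) ≤ (D : ℝ) := by exact_mod_cast h3.trans h4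
      exact inv_nonneg.mpr (by linarith)
    exact mul_le_mul (Smat_lb G D hdeg a b h3 h4) (Smat_lb G D hdeg b e h1 h2) hD
      (Smat_nonneg' G D hdeg a b)
  refine key.trans ?_
  exact Finset.single_le_sum (f := fun c => Smat G a c * Smat G c e)
    (fun c _ => mul_nonneg (Smat_nonneg' G D hdeg a c) (Smat_nonneg' G D hdeg c e))
    (mem_univ b)

end Aux

/-- if `3 ≤ D(x) ≤ D` for all vertices, then for any two oriented
edges `e, e'` with the same terminus,
`(S*²S²)(e,e') ≥ (D(t(e)) - 2)·(D-1)⁻⁴ ≥ (D-1)⁻⁴`. -/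
theorem SstarSqSq_entry_lower_bound {V : Type*} [Fintype V] [DecidableEq V]
    (G : SimpleGraph V) [DecidableRel G.Adj] (D : ℕ)
    (hdeg : ∀ x : V, 3 ≤ G.degree x ∧ G.degree x ≤ D) :
    ∀ e e' : G.Dart, e.snd = e'.snd →
      ((1 : ℝ) / ((D : ℝ) - 1) ^ 4 ≤ ((G.degree e.snd : ℝ) - 2) / ((D : ℝ) - 1) ^ 4) ∧
      ((G.degree e.snd : ℝ) - 2) / ((D : ℝ) - 1) ^ 4 ≤ SstarSqSq G e e' := by
  intro e e' hee'
  set x := e.snd with hx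
  have hdx3 : 3 ≤ G.degree x := (hdeg x).1
  have hdxD : G.degree x ≤ D := (hdeg x).2
  have h3D : (3:ℝ) ≤ (D:ℝ) := by exact_mod_cast hdx3.trans hdxD
  have hDpos : (0:ℝ) < ((D:ℝ) - 1) := by linarith
  have hD4pos : (0:ℝ) < ((D:ℝ) - 1) ^ 4 := by positivity
  have hdx3' : (3:ℝ) ≤ (G.degree x : ℝ) := by exact_mod_cast hdx3
  constructor
  · gcongr
    linarith
  · -- main bound
    -- entry formula
    have hform : SstarSqSq G e e' =
        ∑ a : G.Dart, (Smat G * Smat G) a e * (Smat G * Smat G) a e' := by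
      rw [SstarSqSq, ← transpose_mul, mul_apply]
      simp [transpose_apply]
    -- choice of next dart
    have hex : ∀ b : G.Dart, ∃ a : G.Dart, a.fst = b.snd ∧ a ≠ b.symm := by
      intro b
      have h1 : #{d : G.Dart | d.fst = b.snd} = G.degree b.snd :=
        G.dart_fst_fiber_card_eq_degree b.snd
      have h2 : 1 < #{d : G.Dart | d.fst = b.snd} := by
        rw [h1]; have := (hdeg b.snd).1; omega
      obtain ⟨a, ha, hne⟩ := Finset.exists_mem_ne h2 b.symm
      refine ⟨a, ?_, hne⟩
      simpa using ha
    choose F hF1 hF2 using hex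
    set B : Finset G.Dart :=
      univ.filter (fun b => b.fst = x ∧ b ≠ e.symm ∧ b ≠ e'.symm) with hB
    have hcard : G.degree x - 2 ≤ B.card := by
      have hsub : ({d : G.Dart | d.fst = x} : Finset _) \ {e.symm, e'.symm} ⊆ B := by
        intro b hb
        simp only [Finset.mem_sdiff, Finset.mem_filter, Finset.mem_insert,
          Finset.mem_singleton, Set.mem_setOf_eq] at hb ⊢
        simp only [hB, Finset.mem_filter, Finset.mem_univ, true_and]
        have hb1 : b.fst = x := by simpa using hb.1
        exact ⟨hb1, fun h => hb.2 (Or.inl h), fun h => hb.2 (Or.inr h)⟩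
      have h1 : #{d : G.Dart | d.fst = x} = G.degree x :=
        G.dart_fst_fiber_card_eq_degree x
      have h2 := Finset.card_le_card hsub
      have h3 : #({d : G.Dart | d.fst = x} : Finset _) ≤
          #(({d : G.Dart | d.fst = x} : Finset _) \ {e.symm, e'.symm}) +
          #({e.symm, e'.symm} : Finset G.Dart) :=
        Finset.card_le_card_sdiff_add_card
      have h4 : #({e.symm, e'.symm} : Finset G.Dart) ≤ 2 := by
        apply (Finset.card_insert_le _ _).trans; simp
      omega
    have hInj : Set.InjOn F B := by
      intro b1 hb1 b2 hb2 hfeq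
      simp only [hB, Finset.coe_filter, Set.mem_setOf_eq] at hb1 hb2
      have h1 : b1.snd = b2.snd := by rw [← hF1 b1, ← hF1 b2, hfeq]
      have h2 : b1.fst = b2.fst := hb1.2.1.trans hb2.2.1.symm
      exact SimpleGraph.Dart.ext _ _ (Prod.ext h2 h1)
    -- per-term lower bound
    have hterm : ∀ b ∈ B, ((D:ℝ)-1)⁻¹ * ((D:ℝ)-1)⁻¹ * (((D:ℝ)-1)⁻¹ * ((D:ℝ)-1)⁻¹)
        ≤ (Smat G * Smat G) (F b) e * (Smat G * Smat G) (F b) e' := by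
      intro b hb
      simp only [hB, Finset.mem_filter, Finset.mem_univ, true_and] at hb
      obtain ⟨hbf, hbe, hbe'⟩ := hb
      have t1 := T_lb G D hdeg e b (F b) (hx.symm.trans hbf.symm) hbe.symm
        (hF1 b).symm (hF2 b).symm
      have t2 := T_lb G D hdeg e' b (F b) (hee'.symm.trans hbf.symm) hbe'.symm
        (hF1 b).symm (hF2 b).symm
      have hnn : (0:ℝ) ≤ ((D:ℝ)-1)⁻¹ * ((D:ℝ)-1)⁻¹ := by positivity
      exact mul_le_mul t1 t2 hnn (T_nonneg G D hdeg (F b) e)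
    rw [hform]
    calc ((G.degree x : ℝ) - 2) / ((D:ℝ)-1)^4
        ≤ (B.card : ℝ) * (((D:ℝ)-1)⁻¹ * ((D:ℝ)-1)⁻¹ * (((D:ℝ)-1)⁻¹ * ((D:ℝ)-1)⁻¹)) := by
          have h1 : ((G.degree x : ℝ) - 2) ≤ (B.card : ℝ) := by
            have : ((G.degree x - 2 : ℕ) : ℝ) ≤ (B.card : ℝ) := by exact_mod_cast hcard
            have h2 : ((G.degree x - 2 : ℕ) : ℝ) = (G.degree x : ℝ) - 2 := by
              have : 2 ≤ G.degree x := by omega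
              push_cast [this]; ring
            linarith
          have h2 : ((D:ℝ)-1)⁻¹ * ((D:ℝ)-1)⁻¹ * (((D:ℝ)-1)⁻¹ * ((D:ℝ)-1)⁻¹)
              = (((D:ℝ)-1)^4)⁻¹ := by
            rw [← inv_pow]; ring
          rw [h2, div_eq_mul_inv]
          exact mul_le_mul_of_nonneg_right h1 (by positivity)
      _ ≤ ∑ b ∈ B, (Smat G * Smat G) (F b) e * (Smat G * Smat G) (F b) e' := by
          have := Finset.card_nsmul_le_sum B
            (fun b => (Smat G * Smat G) (F b) e * (Smat G * Smat G) (F b) e') _ hterm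
          simpa [nsmul_eq_mul] using this
      _ = ∑ a ∈ B.image F, (Smat G * Smat G) a e * (Smat G * Smat G) a e' := by
          rw [Finset.sum_image (fun b1 h1 b2 h2 h => hInj h1 h2 h)]
      _ ≤ ∑ a : G.Dart, (Smat G * Smat G) a e * (Smat G * Smat G) a e' := by
          apply Finset.sum_le_sum_of_subset_of_nonneg (Finset.subset_univ _)
          intro a _ _
          exact mul_nonneg (T_nonneg G D hdeg a e) (T_nonneg G D hdeg a e')
end

section
/- In a graph G with all degrees D(x) satisfying 3 ≤ D(x) ≤ D, for any two vertices y, y' at graph distance exactly 2 (sharing a common neighbor x), there exist oriented edges e, e' with t(e) = y, t(e') = y', and (S*²S²)(e,e') ≥ (D−1)^{−4}. -/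
open Finset Matrix

/-!
Pick a neighbour `a ≠ x` of `y`, a neighbour `a' ≠ x` of `y'` and a neighbour `v ∉ {y, y'}` of `x`
(all exist since degrees are at least `3`). Then `a → y → x → v` and `a' → y' → x → v` are
non-backtracking walks, each step of which has weight at least `(D - 1)⁻¹` in `S`. Since
`S*²S² = (S²)ᵀ S²` has nonnegative entries, its `(e, e')` entry with `e = (a, y)`, `e' = (a', y')`
is at least `S²((x, v), e) · S²((x, v), e') ≥ (D - 1)⁻⁴`.
-/

namespace Matrix

variable {l m n R : Type*} [Fintype m] [Semiring R] [PartialOrder R] [IsOrderedRing R]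
  {A : Matrix l m R} {B : Matrix m n R}

theorem mul_apply_nonneg (hA : ∀ i j, 0 ≤ A i j) (hB : ∀ j k, 0 ≤ B j k) (i : l) (k : n) :
    0 ≤ (A * B) i k :=
  Finset.sum_nonneg fun j _ => mul_nonneg (hA i j) (hB j k)

theorem le_mul_apply_of_nonneg (hA : ∀ i j, 0 ≤ A i j) (hB : ∀ j k, 0 ≤ B j k)
    (i : l) (j : m) (k : n) : A i j * B j k ≤ (A * B) i k :=
  Finset.single_le_sum (f := fun j => A i j * B j k)
    (fun j _ => mul_nonneg (hA i j) (hB j k)) (Finset.mem_univ j)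

end Matrix

namespace SimpleGraph

variable {V : Type*} [Fintype V] [DecidableEq V] (G : SimpleGraph V) [DecidableRel G.Adj]

theorem exists_adj_notMem_of_card_lt_degree {v : V} {s : Finset V} (hs : #s < G.degree v) :
    ∃ w, G.Adj v w ∧ w ∉ s := by
  have : (G.neighborFinset v \ s).Nonempty := by
    rw [← Finset.card_pos]
    have := Finset.le_card_sdiff s (G.neighborFinset v)
    rw [card_neighborFinset_eq_degree] at this
    omega
  obtain ⟨w, hw⟩ := this
  rw [Finset.mem_sdiff, mem_neighborFinset] at hw
  exact ⟨w, hw⟩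

omit [DecidableEq V] in
theorem one_lt_degree_of_adj_of_adj {v u w : V} (hu : G.Adj v u) (hw : G.Adj v w) (huw : u ≠ w) :
    1 < G.degree v := by
  rw [← card_neighborFinset_eq_degree, Finset.one_lt_card]
  exact ⟨u, (mem_neighborFinset _ _ _).2 hu, w, (mem_neighborFinset _ _ _).2 hw, huw⟩

theorem Smat_nonneg (e e' : G.Dart) : 0 ≤ Smat G e e' := by
  unfold Smat
  split_ifs
  · have : 1 ≤ G.degree e.fst := G.degree_pos_iff_exists_adj _ |>.2 ⟨_, e.adj⟩
    exact inv_nonneg.2 (sub_nonneg.2 (by exact_mod_cast this))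
  · exact le_rfl

-- `Smat G e e'` weighs the passage from `e'` into `e`; here that is the step `u → v → w`.
theorem inv_le_Smat_mk {D : ℕ} {u v w : V} (huv : G.Adj u v) (hvw : G.Adj v w) (huw : u ≠ w)
    (hv : G.degree v ≤ D) :
    ((D : ℝ) - 1)⁻¹ ≤ Smat G ⟨(v, w), hvw⟩ ⟨(u, v), huv⟩ := by
  have hv₁ : (1 : ℝ) < G.degree v := by
    exact_mod_cast G.one_lt_degree_of_adj_of_adj huv.symm hvw huw
  have hstep : ¬ (Dart.symm ⟨(u, v), huv⟩ : G.Dart) = ⟨(v, w), hvw⟩ := by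
    simp [Dart.ext_iff, huw]
  rw [Smat, if_pos ⟨rfl, hstep⟩]
  exact inv_anti₀ (sub_pos.2 hv₁) (sub_le_sub_right (by exact_mod_cast hv) 1)

theorem inv_sq_le_Smat_sq_mk {D : ℕ} {u v w z : V} (huv : G.Adj u v) (hvw : G.Adj v w)
    (hwz : G.Adj w z) (huw : u ≠ w) (hvz : v ≠ z) (hv : G.degree v ≤ D) (hw : G.degree w ≤ D) :
    ((D : ℝ) - 1)⁻¹ ^ 2 ≤ (Smat G * Smat G) ⟨(w, z), hwz⟩ ⟨(u, v), huv⟩ := by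
  have hD : (1 : ℝ) < D := by
    exact_mod_cast (G.one_lt_degree_of_adj_of_adj huv.symm hvw huw).trans_le hv
  calc ((D : ℝ) - 1)⁻¹ ^ 2
      = ((D : ℝ) - 1)⁻¹ * ((D : ℝ) - 1)⁻¹ := sq _
    _ ≤ Smat G ⟨(w, z), hwz⟩ ⟨(v, w), hvw⟩ * Smat G ⟨(v, w), hvw⟩ ⟨(u, v), huv⟩ :=
        mul_le_mul (G.inv_le_Smat_mk hvw hwz hvz hw) (G.inv_le_Smat_mk huv hvw huw hv)
          (by have := sub_pos.2 hD; positivity) (G.Smat_nonneg _ _)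
    _ ≤ (Smat G * Smat G) ⟨(w, z), hwz⟩ ⟨(u, v), huv⟩ :=
        le_mul_apply_of_nonneg G.Smat_nonneg G.Smat_nonneg _ _ _

theorem SstarSqSq_eq : SstarSqSq G = (Smat G * Smat G)ᵀ * (Smat G * Smat G) := by
  rw [SstarSqSq, transpose_mul]

end SimpleGraph

open SimpleGraph in
theorem SstarSqSq_dist_two_lower_bound_general {V : Type*} [Fintype V] [DecidableEq V]
    (G : SimpleGraph V) [DecidableRel G.Adj] (D : ℕ)
    (hdeg : ∀ x : V, 3 ≤ G.degree x ∧ G.degree x ≤ D)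
    (x y y' : V) (hxy : G.Adj x y) (hxy' : G.Adj x y') :
    ∃ e e' : G.Dart, e.snd = y ∧ e'.snd = y' ∧
      (1 : ℝ) / ((D : ℝ) - 1) ^ 4 ≤ SstarSqSq G e e' := by
  have hlarge (v : V) {s : Finset V} (hs : #s ≤ 2) : #s < G.degree v := by
    have := (hdeg v).1; omega
  obtain ⟨a, hya, hax⟩ := G.exists_adj_notMem_of_card_lt_degree (hlarge y (s := {x}) (by simp))
  obtain ⟨a', hya', hax'⟩ :=
    G.exists_adj_notMem_of_card_lt_degree (hlarge y' (s := {x}) (by simp))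
  obtain ⟨v, hxv, hvyy'⟩ :=
    G.exists_adj_notMem_of_card_lt_degree (hlarge x (s := {y, y'}) card_le_two)
  simp only [mem_insert, mem_singleton, not_or] at hax hax' hvyy'
  have hS := G.Smat_nonneg
  refine ⟨⟨(a, y), hya.symm⟩, ⟨(a', y'), hya'.symm⟩, rfl, rfl, ?_⟩
  calc (1 : ℝ) / ((D : ℝ) - 1) ^ 4 = ((D : ℝ) - 1)⁻¹ ^ 2 * ((D : ℝ) - 1)⁻¹ ^ 2 := by
        rw [one_div, ← inv_pow, ← pow_add]
    _ ≤ (Smat G * Smat G) ⟨(x, v), hxv⟩ ⟨(a, y), hya.symm⟩ *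
          (Smat G * Smat G) ⟨(x, v), hxv⟩ ⟨(a', y'), hya'.symm⟩ :=
        mul_le_mul
          (G.inv_sq_le_Smat_sq_mk _ hxy.symm _ hax (Ne.symm hvyy'.1) (hdeg y).2 (hdeg x).2)
          (G.inv_sq_le_Smat_sq_mk _ hxy'.symm _ hax' (Ne.symm hvyy'.2) (hdeg y').2 (hdeg x).2)
          (by positivity) (mul_apply_nonneg hS hS _ _)
    _ ≤ SstarSqSq G ⟨(a, y), hya.symm⟩ ⟨(a', y'), hya'.symm⟩ := by
        rw [SstarSqSq_eq]
        exact le_mul_apply_of_nonneg (A := (Smat G * Smat G)ᵀ)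
          (fun i j => mul_apply_nonneg hS hS j i) (mul_apply_nonneg hS hS) _ _ _

/-- if `3 ≤ D(x) ≤ D` for all vertices and `y, y'` are two vertices
at graph distance exactly 2 (with common neighbour `x`), then there exist
oriented edges `e, e'` with `t(e) = y`, `t(e') = y'` and
`(S*²S²)(e,e') ≥ (D-1)⁻⁴`. -/
theorem SstarSqSq_dist_two_lower_bound {V : Type*} [Fintype V] [DecidableEq V]
    (G : SimpleGraph V) [DecidableRel G.Adj] (D : ℕ)
    (hdeg : ∀ x : V, 3 ≤ G.degree x ∧ G.degree x ≤ D)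
    (x y y' : V) (hxy : G.Adj x y) (hxy' : G.Adj x y')
    (hne : y ≠ y') (hnadj : ¬ G.Adj y y') :
    ∃ e e' : G.Dart, e.snd = y ∧ e'.snd = y' ∧
      (1 : ℝ) / ((D : ℝ) - 1) ^ 4 ≤ SstarSqSq G e e' :=
  SstarSqSq_dist_two_lower_bound_general G D hdeg x y y' hxy hxy'
end

section
/- Let G be finite, connected and non-bipartite. Then the subspaces O(ℓ²_o(V,π)) = {e ↦ f(o(e)) : Σ f(x)D(x)=0} and T(ℓ²_o(V,π)) = {e ↦ f(t(e)) : Σ f(x)D(x)=0} of ℂ^B intersect trivially: O(ℓ²_o(V,π)) ∩ T(ℓ²_o(V,π)) = {0}. -/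
open Finset

/-- for a finite connected non-bipartite graph (degrees ≥ 2), the
subspaces `O(ℓ²ₒ(V,π))` and `T(ℓ²ₒ(V,π))` of `ℂ^B` intersect trivially: if a
function on oriented edges is simultaneously of the form `e ↦ f(o(e))` and
`e ↦ g(t(e))` with `∑ f(x)D(x) = 0`, `∑ g(x)D(x) = 0`, then it vanishes. -/
theorem origin_terminus_spaces_trivial_intersection
    {V : Type*} [Fintype V] [DecidableEq V]
    (G : SimpleGraph V) [DecidableRel G.Adj]
    (hconn : G.Connected) (hnb : ¬ G.Colorable 2)
    (hdeg : ∀ x : V, 2 ≤ G.degree x)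
    (f g : V → ℂ)
    (hf : ∑ x : V, f x * (G.degree x : ℂ) = 0)
    (hg : ∑ x : V, g x * (G.degree x : ℂ) = 0)
    (heq : ∀ e : G.Dart, f e.fst = g e.snd) :
    ∀ e : G.Dart, f e.fst = 0 := by
  have key : ∀ x y, G.Adj x y → f x = g y := by
    intro x y hxy
    exact heq ⟨(x, y), hxy⟩
  set h : V → ℂ := fun x => f x - g x with hh
  set s : V → ℂ := fun x => f x + g x with hs
  have hedge_h : ∀ x y, G.Adj x y → h x = - h y := by
    intro x y hxy
    simp only [hh]
    rw [key x y hxy, ← key y x hxy.symm]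
    ring
  have hedge_s : ∀ x y, G.Adj x y → s x = s y := by
    intro x y hxy
    simp only [hs]
    rw [key x y hxy, ← key y x hxy.symm]
    ring
  have hwalk : ∀ x y : V, ∀ _ : G.Walk x y, s x = s y ∧ (h y = h x ∨ h y = - h x) := by
    intro x y w
    induction w with
    | nil => exact ⟨rfl, Or.inl rfl⟩
    | @cons a b c hab w ih =>
      obtain ⟨ihs, ihh⟩ := ih
      refine ⟨(hedge_s a b hab).trans ihs, ?_⟩
      have hab' := hedge_h a b hab
      rcases ihh with h1 | h1
      · right; rw [h1, hab', neg_neg]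
      · left; rw [h1, hab']
  by_cases hz : ∀ x, h x = 0
  · obtain ⟨v⟩ := hconn.nonempty
    have hsconst : ∀ x, s x = s v := fun x => ((hwalk v x (hconn v x).some).1).symm
    have hfg : ∀ x, f x = g x := by
      intro x
      have := hz x
      simpa [hh, sub_eq_zero] using this
    have hfx : ∀ x, f x = s v / 2 := by
      intro x
      rw [← hsconst x]
      simp only [hs, ← hfg x]
      ring
    have hsum : (s v / 2) * ∑ x : V, (G.degree x : ℂ) = 0 := by
      rw [Finset.mul_sum, ← hf]
      exact Finset.sum_congr rfl fun x _ => by rw [hfx x]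
    have hdegsum : (∑ x : V, (G.degree x : ℂ)) ≠ 0 := by
      rw [← Nat.cast_sum]
      exact Nat.cast_ne_zero.mpr (Finset.sum_pos
        (fun x _ => lt_of_lt_of_le (by norm_num) (hdeg x))
        ⟨v, Finset.mem_univ v⟩).ne'
    have : s v / 2 = 0 := by
      rcases mul_eq_zero.mp hsum with h0 | h0
      · exact h0
      · exact absurd h0 hdegsum
    intro e
    rw [hfx e.fst, this]
  · push_neg at hz
    obtain ⟨v, hv⟩ := hz
    exfalso
    apply hnb
    refine ⟨SimpleGraph.Coloring.mk (fun x => if h x = h v then (0 : Fin 2) else 1) ?_⟩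
    intro x y hxy hcol
    have hmx := (hwalk v x (hconn v x).some).2
    have hmy := (hwalk v y (hconn v y).some).2
    have hxy' := hedge_h x y hxy
    by_cases hcx : h x = h v
    · by_cases hcy : h y = h v
      · apply hv
        linear_combination (1/2 : ℂ) * hxy' - (1/2 : ℂ) * hcx - (1/2 : ℂ) * hcy
      · simp [hcx, hcy] at hcol
    · by_cases hcy : h y = h v
      · simp [hcx, hcy] at hcol
      · have hx' : h x = - h v := hmx.resolve_left hcx
        have hy' : h y = - h v := hmy.resolve_left hcy
        apply hv
        linear_combination (-1/2 : ℂ) * hxy' + (1/2 : ℂ) * hx' + (1/2 : ℂ) * hy'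
end

section
/- Let G be finite connected and non-bipartite. The subspace of ℂ^B consisting of functions f satisfying Σ_{e : o(e)=x} f(e) = 0 and Σ_{e : t(e)=x} f(e) = 0 for all x ∈ V has dimension 2|E| − 2|V| + 1 = r − 1, where r = |E| − |V| + 1 is the rank of the fundamental group of G. -/
open Finset
open Matrix

/-- The linear map `ℂ^B → ℂ^V × ℂ^V` sending `f` to the functions
`x ↦ ∑_{e : o(e)=x} f e` and `x ↦ ∑_{e : t(e)=x} f e`. -/
noncomputable def sumsMap {V : Type*} [Fintype V] [DecidableEq V]
    (G : SimpleGraph V) [DecidableRel G.Adj] :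
    (G.Dart → ℂ) →ₗ[ℂ] ((V → ℂ) × (V → ℂ)) where
  toFun f :=
    (fun x => ∑ e ∈ Finset.univ.filter (fun e : G.Dart => e.fst = x), f e,
     fun x => ∑ e ∈ Finset.univ.filter (fun e : G.Dart => e.snd = x), f e)
  map_add' f g := by
    ext x <;> simp [Finset.sum_add_distrib]
  map_smul' c f := by
    ext x <;> simp [Finset.mul_sum]

/-- for a finite connected non-bipartite graph with degrees ≥ 2,
the space of functions `f : B → ℂ` with `∑_{o(e)=x} f e = 0` and
`∑_{t(e)=x} f e = 0` for all `x` has dimension `2|E| - 2|V| + 1 = r - 1`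
(stated additively: `dim + 2|V| = 2|E| + 1`). -/
theorem dim_doubly_harmonic_space {V : Type*} [Fintype V] [DecidableEq V]
    (G : SimpleGraph V) [DecidableRel G.Adj]
    (hconn : G.Connected) (hnb : ¬ G.Colorable 2)
    (hdeg : ∀ x : V, 2 ≤ G.degree x) :
    Module.finrank ℂ (LinearMap.ker (sumsMap G)) + 2 * Fintype.card V =
      2 * G.edgeFinset.card + 1 := by
  classical
  set M : Matrix (V ⊕ V) G.Dart ℂ :=
    Matrix.of fun i d => Sum.elim (fun x => if d.fst = x then (1:ℂ) else 0)
      (fun x => if d.snd = x then (1:ℂ) else 0) i with hMdef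
  set eVV := LinearEquiv.sumArrowLequivProdArrow V V ℂ ℂ with heVV
  -- sumsMap corresponds to M
  have key : eVV.symm.toLinearMap ∘ₗ sumsMap G = M.mulVecLin := by
    apply LinearMap.ext; intro f
    funext i
    cases i with
    | inl x =>
      simp [sumsMap, M, eVV, LinearEquiv.sumArrowLequivProdArrow,
        Equiv.sumArrowEquivProdArrow, Matrix.mulVecLin_apply, Matrix.mulVec,
        dotProduct, Finset.sum_filter, ite_mul]
    | inr x =>
      simp [sumsMap, M, eVV, LinearEquiv.sumArrowLequivProdArrow,
        Equiv.sumArrowEquivProdArrow, Matrix.mulVecLin_apply, Matrix.mulVec,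
        dotProduct, Finset.sum_filter, ite_mul]
  -- the transpose map evaluated
  have hmv : ∀ (v : V ⊕ V → ℂ) (d : G.Dart),
      Mᵀ.mulVecLin v d = v (Sum.inl d.fst) + v (Sum.inr d.snd) := by
    intro v d
    simp [M, Matrix.mulVecLin_apply, Matrix.mulVec, Matrix.vecMul, dotProduct,
      Matrix.transpose_apply, Fintype.sum_sum_type, ite_mul, mul_ite, mul_one, mul_zero,
      Finset.sum_ite_eq]
  obtain ⟨x0⟩ := hconn.nonempty
  set w0 : V ⊕ V → ℂ := Sum.elim (fun _ => (1:ℂ)) (fun _ => (-1:ℂ)) with hw0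
  have hker : LinearMap.ker Mᵀ.mulVecLin = Submodule.span ℂ {w0} := by
    apply le_antisymm
    · intro v hv
      have hv' : ∀ d : G.Dart, v (Sum.inl d.fst) + v (Sum.inr d.snd) = 0 := by
        intro d
        have := congrFun (LinearMap.mem_ker.mp hv) d
        rwa [hmv] at this
      have hadj : ∀ {x y : V}, G.Adj x y → v (Sum.inl x) + v (Sum.inr y) = 0 :=
        fun h => hv' ⟨(_, _), h⟩
      set dd : V → ℂ := fun x => v (Sum.inl x) + v (Sum.inr x) with hdd
      have hd : ∀ {x y : V}, G.Adj x y → dd x = -dd y := by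
        intro x y h
        have h1 := hadj h
        have h2 := hadj h.symm
        simp only [dd]
        linear_combination h1 + h2
      -- walk lemma
      have hwalk : ∀ {u w : V} (_ : G.Walk u w), dd w = dd u ∨ dd w = -dd u := by
        intro u w p
        induction p with
        | nil => left; rfl
        | cons h p ih =>
          rcases ih with h1 | h1
          · right; linear_combination h1 + hd h
          · left; linear_combination h1 - hd h
      -- dd vanishes (non-bipartiteness)
      have hdd0 : ∀ x, dd x = 0 := by
        by_contra hx
        push_neg at hx
        obtain ⟨x1, hx1⟩ := hx
        apply hnb
        have hval : ∀ {u w : V}, G.Adj u w →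
            ((dd u = dd x1) : Prop) ≠ ((dd w = dd x1) : Prop) := by
          intro u w h heq
          rw [eq_iff_iff] at heq
          have huw : dd u = -dd w := hd h
          by_cases hu : dd u = dd x1
          · have hw : dd w = dd x1 := heq.mp hu
            rw [hu, hw] at huw
            exact hx1 (by linear_combination huw / 2)
          · have hw : ¬ dd w = dd x1 := fun hw => hu (heq.mpr hw)
            obtain ⟨pu⟩ := hconn.preconnected x1 u
            obtain ⟨pw⟩ := hconn.preconnected x1 w
            have hu' : dd u = -dd x1 := (hwalk pu).resolve_left hu
            have hw' : dd w = -dd x1 := (hwalk pw).resolve_left hw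
            rw [hu', hw'] at huw
            exact hx1 (by linear_combination -huw / 2)
        have C : G.Coloring Prop := SimpleGraph.Coloring.mk
          (fun v => dd v = dd x1) (fun h => hval h)
        have := C.colorable
        rwa [show Fintype.card Prop = 2 from by simp] at this
      -- inl-part is constant
      have hba : ∀ x, v (Sum.inr x) = - v (Sum.inl x) := by
        intro x
        have := hdd0 x
        simp only [dd] at this
        linear_combination this
      have haa : ∀ {x y : V}, G.Adj x y → v (Sum.inl x) = v (Sum.inl y) := by
        intro x y h
        have h1 := hadj h
        have h2 := hba y
        linear_combination h1 - h2
      have hconst : ∀ {u w : V} (_ : G.Walk u w), v (Sum.inl u) = v (Sum.inl w) := by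
        intro u w p
        induction p with
        | nil => rfl
        | cons h _ ih => rw [haa h, ih]
      refine Submodule.mem_span_singleton.mpr ⟨v (Sum.inl x0), ?_⟩
      funext i
      cases i with
      | inl x =>
        obtain ⟨p⟩ := hconn.preconnected x0 x
        simp [w0, hconst p]
      | inr x =>
        obtain ⟨p⟩ := hconn.preconnected x0 x
        simp [w0, hba x, hconst p]
    · rw [Submodule.span_le, Set.singleton_subset_iff]
      refine LinearMap.mem_ker.mpr ?_
      funext d
      rw [hmv]
      simp [w0]
  -- dimension count
  have hw0ne : w0 ≠ 0 := by
    intro h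
    have := congrFun h (Sum.inl x0)
    simp [w0] at this
  have hkdim : Module.finrank ℂ (LinearMap.ker Mᵀ.mulVecLin) = 1 := by
    rw [hker]; exact finrank_span_singleton hw0ne
  have hrn2 : Module.finrank ℂ (LinearMap.range Mᵀ.mulVecLin) + 1 = 2 * Fintype.card V := by
    have := LinearMap.finrank_range_add_finrank_ker Mᵀ.mulVecLin
    rw [hkdim, Module.finrank_pi, Fintype.card_sum] at this
    omega
  have hrank2 : Mᵀ.rank + 1 = 2 * Fintype.card V := hrn2
  have hrank1 : Module.finrank ℂ (LinearMap.range (sumsMap G)) = M.rank := by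
    have : LinearMap.range M.mulVecLin
        = Submodule.map eVV.symm.toLinearMap (LinearMap.range (sumsMap G)) := by
      rw [← key, LinearMap.range_comp]
    rw [Matrix.rank, this, LinearEquiv.finrank_map_eq]
  have hrn1 : Module.finrank ℂ (LinearMap.range (sumsMap G))
      + Module.finrank ℂ (LinearMap.ker (sumsMap G)) = 2 * G.edgeFinset.card := by
    have := LinearMap.finrank_range_add_finrank_ker (sumsMap G)
    rwa [Module.finrank_pi, SimpleGraph.dart_card_eq_twice_card_edges] at this
  have htr : Mᵀ.rank = M.rank := Matrix.rank_transpose M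
  omega
end

section
/- Theorem (mixing of the non-backtracking walk): Let G be a finite graph with 3 ≤ D(x) ≤ D for all x, finite, connected, non-bipartite, and suppose the spectrum of P² on ℓ²_o(V,π) is contained in [0, 1−β] for some β > 0. Then the spectrum of S*²S² on ℓ²_o(B,U) is contained in [0, 1 − c(D,β)] where c(D,β) = min( Q^{−4}β / (2(1+Q^{−4}β/6)²), Q^{−4}β / ((1+6Q⁴/β)²) ) with Q = D−1; in particular c(D,β) > 0. -/
/-!
Split a real function on darts as `φ = g ∘ snd + r`, where `g x` is the mean of `φ` over the
darts entering `x`. One non-backtracking step sends `g ∘ snd` to `g ∘ fst`, and a second step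
turns that into a local average whose energy is at most `(3/4)‖Pg‖²_π + (1/4)‖g‖²_π`, hence at
most `(1 - 3β/4)‖φ‖²` by the spectral gap of `P²`. The remainder `r` costs energy: at each
vertex of degree `≥ 3`, `‖Sφ‖² + (3/4)‖r‖² ≤ ‖φ‖²`, so `‖S²r‖²` is bounded by `4/3` of the
energy lost by `S²`. The inequality `(a + b)² ≤ (1 + δ)a² + (1 + δ⁻¹)b²` with `δ = 3β/8` then
gives `‖S²φ‖² ≤ (1 - β²/20)‖φ‖²`, and `β²/20 ≥ c(D, β)`. Since `S` is real, real and
imaginary parts are treated separately.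
-/

open Finset Matrix

/-- The random-walk laplacian `P f x = (1/D(x)) ∑_{y ∼ x} f y`. -/
noncomputable def lapP {V : Type*} [Fintype V] [DecidableEq V]
    (G : SimpleGraph V) [DecidableRel G.Adj] (f : V → ℂ) (x : V) : ℂ :=
  ((G.degree x : ℂ))⁻¹ * ∑ y ∈ G.neighborFinset x, f y

/-- The constant `c(D, β)` of the paper, with `Q = D - 1`. -/
noncomputable def cConst (D : ℕ) (β : ℝ) : ℝ :=
  min ((β / ((D : ℝ) - 1) ^ 4) / (2 * (1 + (β / ((D : ℝ) - 1) ^ 4) / 6) ^ 2))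
      ((β / ((D : ℝ) - 1) ^ 4) / ((1 + 6 * ((D : ℝ) - 1) ^ 4 / β) ^ 2))

section LocalEstimates

lemma div_sq_mul_self {K : Type*} [Field K] (a b : K) : (a / b) ^ 2 * b = a ^ 2 / b := by
  rcases eq_or_ne b 0 with rfl | hb
  · simp
  · field_simp

variable {α : Type*} (s : Finset α) (f : α → ℝ)

lemma sum_sq_sub_sum_div_card :
    ∑ b ∈ s, (f b - (∑ b' ∈ s, f b') / #s) ^ 2 = ∑ b ∈ s, f b ^ 2 - (∑ b ∈ s, f b) ^ 2 / #s := by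
  rcases s.eq_empty_or_nonempty with rfl | hs
  · simp
  have hn : (#s : ℝ) ≠ 0 := by positivity
  simp only [sub_sq, sum_add_distrib, sum_sub_distrib, ← sum_mul, ← mul_sum, sum_const,
    nsmul_eq_mul]
  field_simp
  ring

/-- Writing `∑ f² = (∑ f)²/n + T` with `T ≥ 0`, the left side equals `(∑ f)²/n + T/(n-1)²`,
and `(n-1)⁻² ≤ 1/4` once `n ≥ 3`. -/
lemma sum_sq_sum_sub_div_le (hs : 3 ≤ #s) :
    ∑ b ∈ s, ((∑ b' ∈ s, f b' - f b) / (#s - 1)) ^ 2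
      ≤ 3 / 4 * ((∑ b ∈ s, f b) ^ 2 / #s) + 1 / 4 * ∑ b ∈ s, f b ^ 2 := by
  have hn : (3 : ℝ) ≤ #s := by exact_mod_cast hs
  have hT : 0 ≤ ∑ b ∈ s, f b ^ 2 - (∑ b ∈ s, f b) ^ 2 / #s := by
    rw [← sum_sq_sub_sum_div_card]
    positivity
  have hlhs : ∑ b ∈ s, ((∑ b' ∈ s, f b' - f b) / (#s - 1)) ^ 2
      = (∑ b ∈ s, f b) ^ 2 / #s
        + (∑ b ∈ s, f b ^ 2 - (∑ b ∈ s, f b) ^ 2 / #s) / ((#s : ℝ) - 1) ^ 2 := by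
    have hnum : ∑ b ∈ s, (∑ b' ∈ s, f b' - f b) ^ 2
        = #s * (∑ b ∈ s, f b) ^ 2 - 2 * (∑ b ∈ s, f b) ^ 2 + ∑ b ∈ s, f b ^ 2 := by
      simp only [sub_sq, sum_add_distrib, sum_sub_distrib, ← mul_sum, sum_const, nsmul_eq_mul]
      ring
    have : (#s : ℝ) - 1 ≠ 0 := by linarith
    simp only [div_pow, ← sum_div, hnum]
    field_simp
    ring
  have hq : (∑ b ∈ s, f b ^ 2 - (∑ b ∈ s, f b) ^ 2 / #s) / ((#s : ℝ) - 1) ^ 2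
      ≤ (∑ b ∈ s, f b ^ 2 - (∑ b ∈ s, f b) ^ 2 / #s) / 4 :=
    div_le_div_of_nonneg_left hT (by norm_num) (by nlinarith)
  rw [hlhs]
  linarith

lemma sum_sq_add_le {ι : Type*} (s : Finset ι) (u w : ι → ℝ) {δ : ℝ} (hδ : 0 < δ) :
    ∑ i ∈ s, (u i + w i) ^ 2 ≤ (1 + δ) * ∑ i ∈ s, u i ^ 2 + (1 + δ⁻¹) * ∑ i ∈ s, w i ^ 2 := by
  rw [mul_sum, mul_sum, ← sum_add_distrib]
  refine sum_le_sum fun i _ => ?_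
  have h : 0 ≤ (δ * u i - w i) ^ 2 / δ := by positivity
  have : (δ * u i - w i) ^ 2 / δ = δ * u i ^ 2 - 2 * u i * w i + δ⁻¹ * w i ^ 2 := by
    field_simp
    ring
  nlinarith

lemma le_one_sub_sq_div_twenty_mul {β Φ Ψ A B : ℝ} (hβ : 0 < β) (hβ1 : β ≤ 1) (hA0 : 0 ≤ A)
    (hB0 : 0 ≤ B) (hA : A ≤ (1 - 3 / 4 * β) * Φ) (hB : B ≤ 4 / 3 * (Φ - Ψ))
    (hΨ : Ψ ≤ (1 + 3 * β / 8) * A + (1 + 8 / (3 * β)) * B) :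
    Ψ ≤ (1 - β ^ 2 / 20) * Φ := by
  have hΨβ : β * Ψ ≤ β * (1 + 3 * β / 8) * A + (β + 8 / 3) * B := by
    have := mul_le_mul_of_nonneg_left hΨ hβ.le
    have hk : β * (1 + 8 / (3 * β)) = β + 8 / 3 := by field_simp
    nlinarith
  have hΦ : 0 ≤ Φ := by nlinarith
  nlinarith [mul_le_mul_of_nonneg_left hA (by positivity : 0 ≤ β * (1 + 3 * β / 8)),
    mul_le_mul_of_nonneg_left hB (by positivity : 0 ≤ β + 8 / 3), mul_nonneg hβ.le hΦ,
    mul_nonneg (mul_nonneg hβ.le hβ.le) hΦ]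

end LocalEstimates

namespace SimpleGraph

variable {V : Type*} [Fintype V] (G : SimpleGraph V) [DecidableRel G.Adj]

noncomputable def walkAvg (g : V → ℝ) (x : V) : ℝ := (∑ y ∈ G.neighborFinset x, g y) / G.degree x

lemma walkAvg_mul_degree (g : V → ℝ) (x : V) :
    G.walkAvg g x * G.degree x = ∑ y ∈ G.neighborFinset x, g y := by
  rcases eq_or_ne (G.degree x) 0 with h | h
  · simp [walkAvg, h, card_eq_zero.1 (h ▸ G.card_neighborFinset_eq_degree x)]
  · simp [walkAvg, h]

lemma sum_mul_sum_neighborFinset_comm {R : Type*} [CommSemiring R] (a b : V → R) :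
    ∑ x, a x * ∑ y ∈ G.neighborFinset x, b y = ∑ y, b y * ∑ x ∈ G.neighborFinset y, a x := by
  simp_rw [← adjMatrix_mulVec_apply]
  change a ⬝ᵥ (G.adjMatrix R *ᵥ b) = b ⬝ᵥ (G.adjMatrix R *ᵥ a)
  rw [dotProduct_mulVec, ← mulVec_transpose, transpose_adjMatrix, dotProduct_comm]

lemma sum_sum_neighborFinset {R : Type*} [CommSemiring R] (F : V → R) :
    ∑ x, ∑ y ∈ G.neighborFinset x, F y = ∑ x, F x * G.degree x := by
  simpa [card_neighborFinset_eq_degree] using G.sum_mul_sum_neighborFinset_comm 1 F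

lemma sum_comp_symm {M : Type*} [AddCommMonoid M] (F : G.Dart → M) :
    ∑ e : G.Dart, F e.symm = ∑ e, F e :=
  (Dart.symm_involutive.toPerm _).sum_comp univ F (by simp)

lemma sum_walkAvg_walkAvg_mul_degree (g : V → ℝ) :
    ∑ x, g x * G.walkAvg (G.walkAvg g) x * G.degree x = ∑ x, G.walkAvg g x ^ 2 * G.degree x := by
  simp_rw [mul_assoc, walkAvg_mul_degree]
  rw [sum_mul_sum_neighborFinset_comm]
  simp_rw [← walkAvg_mul_degree]
  exact sum_congr rfl fun x _ => by ring

lemma le_one_of_sum_sq_walkAvg_le [DecidableEq V] {β : ℝ} {x y : V} (hxy : G.Adj x y)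
    (hgap : ∀ g : V → ℝ, ∑ x, g x * G.degree x = 0 →
      ∑ x, G.walkAvg g x ^ 2 * G.degree x ≤ (1 - β) * ∑ x, g x ^ 2 * G.degree x) :
    β ≤ 1 := by
  set g : V → ℝ := Pi.single x (G.degree y : ℝ) - Pi.single y (G.degree x : ℝ)
  have hg : ∑ z, g z * G.degree z = 0 := by
    simp [g, sub_mul, Pi.single_apply, ite_mul, mul_comm]
  have hx : 0 < G.degree x := G.degree_pos_iff_exists_adj x |>.2 ⟨y, hxy⟩
  have hy : 0 < G.degree y := G.degree_pos_iff_exists_adj y |>.2 ⟨x, hxy.symm⟩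
  have hpos : 0 < ∑ z, g z ^ 2 * G.degree z := by
    refine lt_of_lt_of_le ?_ (single_le_sum (fun z _ => by positivity) (mem_univ x))
    simp [g, hxy.ne, hx, hy]
  have hnonneg : 0 ≤ ∑ z, G.walkAvg g z ^ 2 * G.degree z := by positivity
  nlinarith [hgap g hg]

variable [DecidableEq V]

def inDarts (x : V) : Finset G.Dart := {e | e.snd = x}

noncomputable def inAvg (φ : G.Dart → ℝ) (x : V) : ℝ := (∑ e ∈ G.inDarts x, φ e) / G.degree x

variable {G} in
@[simp] lemma mem_inDarts {x : V} {e : G.Dart} : e ∈ G.inDarts x ↔ e.snd = x := by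
  simp [inDarts]

lemma sum_inDarts_fst {M : Type*} [AddCommMonoid M] (x : V) (F : V → M) :
    ∑ e ∈ G.inDarts x, F e.fst = ∑ y ∈ G.neighborFinset x, F y := by
  refine sum_nbij (fun e => e.fst) (fun e he => ?_) (fun e he e' he' h => ?_) (fun y hy => ?_)
    (fun _ _ => rfl)
  · rw [mem_inDarts] at he
    rw [mem_neighborFinset, ← he]
    exact e.adj.symm
  · ext
    · exact h
    · rw [mem_coe, mem_inDarts] at he he'
      rw [he, he']
  · exact ⟨⟨(y, x), G.adj_symm ((G.mem_neighborFinset x y).1 hy)⟩, by simp, rfl⟩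

lemma card_inDarts (x : V) : #(G.inDarts x) = G.degree x := by
  rw [card_eq_sum_ones, G.sum_inDarts_fst x (fun _ => 1), ← card_eq_sum_ones,
    card_neighborFinset_eq_degree]

lemma sum_eq_sum_inDarts {M : Type*} [AddCommMonoid M] (F : G.Dart → M) :
    ∑ e, F e = ∑ x, ∑ e ∈ G.inDarts x, F e :=
  (sum_fiberwise univ (fun e : G.Dart => e.snd) F).symm

lemma inAvg_mul_degree (φ : G.Dart → ℝ) (x : V) :
    G.inAvg φ x * G.degree x = ∑ e ∈ G.inDarts x, φ e := by
  rcases eq_or_ne (G.degree x) 0 with h | h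
  · simp [inAvg, h, card_eq_zero.1 (h ▸ G.card_inDarts x)]
  · simp [inAvg, h]

lemma sum_inAvg_sq_mul_degree_le (φ : G.Dart → ℝ) :
    ∑ x, G.inAvg φ x ^ 2 * G.degree x ≤ ∑ e, φ e ^ 2 := by
  rw [G.sum_eq_sum_inDarts]
  refine sum_le_sum fun x _ => ?_
  rw [inAvg, div_sq_mul_self]
  refine div_le_of_le_mul₀ (by positivity) (by positivity) ?_
  simpa [card_inDarts, mul_comm] using sq_sum_le_card_mul_sum_sq (s := G.inDarts x) (f := φ)

lemma sum_inAvg_mul_degree (φ : G.Dart → ℝ) :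
    ∑ x, G.inAvg φ x * G.degree x = ∑ e, φ e := by
  simp only [inAvg_mul_degree, ← sum_eq_sum_inDarts]

end SimpleGraph

section NonBacktracking

variable {V : Type*} [Fintype V] [DecidableEq V] (G : SimpleGraph V) [DecidableRel G.Adj]

open SimpleGraph

lemma Smat_mulVec_apply (φ : G.Dart → ℝ) (e : G.Dart) :
    (Smat G *ᵥ φ) e = (∑ e' ∈ (G.inDarts e.fst).erase e.symm, φ e') / (G.degree e.fst - 1) := by
  have hfilter : ({e' | e'.snd = e.fst ∧ e'.symm ≠ e} : Finset G.Dart)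
      = (G.inDarts e.fst).erase e.symm := by
    ext e'
    have : e'.symm ≠ e ↔ e' ≠ e.symm := by
      rw [← Dart.symm_involutive.injective.ne_iff, Dart.symm_symm]
    simp [this, and_comm]
  simp only [mulVec, dotProduct, Smat, ite_mul, zero_mul, ← sum_filter, hfilter, ← mul_sum,
    div_eq_inv_mul]

lemma Smat_mulVec_symm (φ : G.Dart → ℝ) (e : G.Dart) :
    (Smat G *ᵥ φ) e.symm = (∑ e' ∈ G.inDarts e.snd, φ e' - φ e) / (G.degree e.snd - 1) := by
  rw [Smat_mulVec_apply, Dart.symm_symm, sum_erase_eq_sub (by simp)]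
  rfl

lemma sum_sq_Smat_mulVec (φ : G.Dart → ℝ) :
    ∑ e, (Smat G *ᵥ φ) e ^ 2
      = ∑ x, ∑ e ∈ G.inDarts x, ((∑ e' ∈ G.inDarts x, φ e' - φ e) / (G.degree x - 1)) ^ 2 := by
  rw [← G.sum_comp_symm, G.sum_eq_sum_inDarts]
  refine sum_congr rfl fun x _ => sum_congr rfl fun e he => ?_
  rw [Smat_mulVec_symm, mem_inDarts.1 he]

lemma sum_sq_Smat_mulVec_add_le (hdeg : ∀ x, 3 ≤ G.degree x) (φ : G.Dart → ℝ) :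
    ∑ e, (Smat G *ᵥ φ) e ^ 2 + 3 / 4 * ∑ e, (φ e - G.inAvg φ e.snd) ^ 2 ≤ ∑ e, φ e ^ 2 := by
  rw [sum_sq_Smat_mulVec, G.sum_eq_sum_inDarts (fun e => (φ e - G.inAvg φ e.snd) ^ 2),
    G.sum_eq_sum_inDarts (fun e => φ e ^ 2), mul_sum, ← sum_add_distrib]
  refine sum_le_sum fun x _ => ?_
  have hcenter : ∀ e ∈ G.inDarts x, (φ e - G.inAvg φ e.snd) ^ 2
      = (φ e - (∑ e' ∈ G.inDarts x, φ e') / #(G.inDarts x)) ^ 2 := by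
    intro e he
    rw [mem_inDarts.1 he, inAvg, card_inDarts]
  have hlocal := sum_sq_sum_sub_div_le (G.inDarts x) φ (G.card_inDarts x ▸ hdeg x)
  rw [sum_congr rfl hcenter, sum_sq_sub_sum_div_card, ← card_inDarts]
  linarith

lemma sum_sq_Smat_mulVec_le (hdeg : ∀ x, 3 ≤ G.degree x) (φ : G.Dart → ℝ) :
    ∑ e, (Smat G *ᵥ φ) e ^ 2 ≤ ∑ e, φ e ^ 2 := by
  have := sum_sq_Smat_mulVec_add_le G hdeg φ
  have : 0 ≤ ∑ e, (φ e - G.inAvg φ e.snd) ^ 2 := by positivity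
  linarith

lemma Smat_mulVec_comp_snd (hdeg : ∀ x, 2 ≤ G.degree x) (F : V → ℝ) :
    (Smat G *ᵥ fun e => F e.snd) = fun e => F e.fst := by
  ext e
  have hF : ∀ e' ∈ (G.inDarts e.fst).erase e.symm, F e'.snd = F e.fst :=
    fun e' he' => by rw [mem_inDarts.1 (mem_of_mem_erase he')]
  have hcard : (#((G.inDarts e.fst).erase e.symm) : ℝ) = G.degree e.fst - 1 := by
    rw [card_erase_of_mem (by simp), card_inDarts, Nat.cast_pred (by linarith [hdeg e.fst])]
  have : (G.degree e.fst : ℝ) - 1 ≠ 0 := by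
    have : (2 : ℝ) ≤ G.degree e.fst := by exact_mod_cast hdeg e.fst
    linarith
  rw [Smat_mulVec_apply, sum_congr rfl hF, sum_const, nsmul_eq_mul, hcard]
  field_simp

lemma sum_sq_Smat_mulVec_comp_fst_le (hdeg : ∀ x, 3 ≤ G.degree x) (g : V → ℝ) :
    ∑ e, (Smat G *ᵥ fun e => g e.fst) e ^ 2
      ≤ 3 / 4 * ∑ x, G.walkAvg g x ^ 2 * G.degree x + 1 / 4 * ∑ x, g x ^ 2 * G.degree x := by
  calc ∑ e, (Smat G *ᵥ fun e => g e.fst) e ^ 2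
      = ∑ x, ∑ y ∈ G.neighborFinset x,
          ((∑ y' ∈ G.neighborFinset x, g y' - g y) / (G.degree x - 1)) ^ 2 := by
        rw [sum_sq_Smat_mulVec]
        refine sum_congr rfl fun x _ => ?_
        rw [G.sum_inDarts_fst x g]
        exact G.sum_inDarts_fst x fun y => ((∑ y' ∈ G.neighborFinset x, g y' - g y) / _) ^ 2
    _ ≤ ∑ x, (3 / 4 * ((∑ y ∈ G.neighborFinset x, g y) ^ 2 / #(G.neighborFinset x))
          + 1 / 4 * ∑ y ∈ G.neighborFinset x, g y ^ 2) :=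
        sum_le_sum fun x _ => sum_sq_sum_sub_div_le _ g (hdeg x)
    _ = _ := by
        simp only [sum_add_distrib, ← mul_sum, sum_sum_neighborFinset, walkAvg,
          card_neighborFinset_eq_degree, div_sq_mul_self]

theorem sum_sq_Smat_mulVec_Smat_mulVec_le (hdeg : ∀ x, 3 ≤ G.degree x) {β : ℝ} (hβ : 0 < β)
    (hβ1 : β ≤ 1) (hgap : ∀ g : V → ℝ, ∑ x, g x * G.degree x = 0 →
      ∑ x, G.walkAvg g x ^ 2 * G.degree x ≤ (1 - β) * ∑ x, g x ^ 2 * G.degree x)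
    (φ : G.Dart → ℝ) (hφ : ∑ e, φ e = 0) :
    ∑ e, (Smat G *ᵥ (Smat G *ᵥ φ)) e ^ 2 ≤ (1 - β ^ 2 / 20) * ∑ e, φ e ^ 2 := by
  set g := G.inAvg φ
  set r : G.Dart → ℝ := fun e => φ e - g e.snd
  have hsplit : Smat G *ᵥ (Smat G *ᵥ φ)
      = (Smat G *ᵥ fun e => g e.fst) + Smat G *ᵥ (Smat G *ᵥ r) := by
    have hφr : φ = (fun e => g e.snd) + r := by ext; simp [r]
    rw [hφr, mulVec_add, Smat_mulVec_comp_snd G (fun x => by linarith [hdeg x]), mulVec_add]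
  have hvertex : ∑ e, (Smat G *ᵥ fun e => g e.fst) e ^ 2 ≤ (1 - 3 / 4 * β) * ∑ e, φ e ^ 2 :=
    calc ∑ e, (Smat G *ᵥ fun e => g e.fst) e ^ 2
        ≤ 3 / 4 * ∑ x, G.walkAvg g x ^ 2 * G.degree x + 1 / 4 * ∑ x, g x ^ 2 * G.degree x :=
          sum_sq_Smat_mulVec_comp_fst_le G hdeg g
      _ ≤ 3 / 4 * ((1 - β) * ∑ x, g x ^ 2 * G.degree x) + 1 / 4 * ∑ x, g x ^ 2 * G.degree x := by
          gcongr
          exact hgap g (by rw [sum_inAvg_mul_degree, hφ])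
      _ = (1 - 3 / 4 * β) * ∑ x, g x ^ 2 * G.degree x := by ring
      _ ≤ (1 - 3 / 4 * β) * ∑ e, φ e ^ 2 := by
          gcongr
          · linarith
          · exact sum_inAvg_sq_mul_degree_le G φ
  have hrest : ∑ e, (Smat G *ᵥ (Smat G *ᵥ r)) e ^ 2
      ≤ 4 / 3 * (∑ e, φ e ^ 2 - ∑ e, (Smat G *ᵥ (Smat G *ᵥ φ)) e ^ 2) := by
    have h1 := sum_sq_Smat_mulVec_le G hdeg (Smat G *ᵥ r)
    have h2 := sum_sq_Smat_mulVec_le G hdeg r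
    have h3 := sum_sq_Smat_mulVec_add_le G hdeg φ
    have h4 := sum_sq_Smat_mulVec_le G hdeg (Smat G *ᵥ φ)
    linarith
  have hyoung := sum_sq_add_le univ (Smat G *ᵥ fun e => g e.fst) (Smat G *ᵥ (Smat G *ᵥ r))
    (show 0 < 3 * β / 8 by positivity)
  simp_rw [← Pi.add_apply, ← hsplit, inv_div] at hyoung
  exact le_one_sub_sq_div_twenty_mul hβ hβ1 (by positivity) (by positivity) hvertex hrest hyoung

end NonBacktracking

section Laplacian

variable {V : Type*} [Fintype V] [DecidableEq V] (G : SimpleGraph V) [DecidableRel G.Adj]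

lemma lapP_ofReal (g : V → ℝ) : lapP G (fun x => (g x : ℂ)) = fun x => (G.walkAvg g x : ℂ) := by
  ext x
  simp [lapP, SimpleGraph.walkAvg, div_eq_inv_mul]

lemma re_sum_conj_mul_lapP_lapP_ofReal (g : V → ℝ) :
    (∑ x, starRingEnd ℂ (g x) * lapP G (lapP G fun x => (g x : ℂ)) x * G.degree x).re
      = ∑ x, G.walkAvg g x ^ 2 * G.degree x := by
  rw [lapP_ofReal, lapP_ofReal, ← G.sum_walkAvg_walkAvg_mul_degree]
  simp

end Laplacian

section QuadraticForm

variable {ι : Type*} [Fintype ι]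

lemma re_sum_conj_mul_sum_ofReal_mul (M : Matrix ι ι ℝ) (φ : ι → ℂ) :
    (∑ i, starRingEnd ℂ (φ i) * ∑ j, (M i j : ℂ) * φ j).re
      = (fun i => (φ i).re) ⬝ᵥ (M *ᵥ fun i => (φ i).re)
        + (fun i => (φ i).im) ⬝ᵥ (M *ᵥ fun i => (φ i).im) := by
  simp only [dotProduct, mulVec, mul_sum, Complex.re_sum, ← sum_add_distrib, Complex.mul_re,
    Complex.conj_re, Complex.conj_im, Complex.ofReal_re, Complex.ofReal_im, Complex.mul_im]
  refine sum_congr rfl fun i _ => sum_congr rfl fun j _ => ?_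
  ring

lemma dotProduct_transpose_mul_self_mulVec (A : Matrix ι ι ℝ) (v : ι → ℝ) :
    v ⬝ᵥ ((Aᵀ * A) *ᵥ v) = ∑ i, (A *ᵥ v) i ^ 2 := by
  rw [← mulVec_mulVec, dotProduct_mulVec, vecMul_transpose]
  simp [dotProduct, sq]

lemma sum_norm_sq_eq_sum_re_sq_add_sum_im_sq (φ : ι → ℂ) :
    ∑ i, ‖φ i‖ ^ 2 = ∑ i, (φ i).re ^ 2 + ∑ i, (φ i).im ^ 2 := by
  rw [← sum_add_distrib]
  refine sum_congr rfl fun i _ => ?_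
  rw [Complex.sq_norm, Complex.normSq_apply]
  ring

end QuadraticForm

lemma SstarSqSq_eq_transpose_mul_self {V : Type*} [Fintype V] [DecidableEq V] (G : SimpleGraph V)
    [DecidableRel G.Adj] : SstarSqSq G = (Smat G * Smat G)ᵀ * (Smat G * Smat G) := by
  rw [SstarSqSq, transpose_mul]

lemma cConst_pos {D : ℕ} {β : ℝ} (hD : 2 ≤ D) (hβ : 0 < β) : 0 < cConst D β := by
  have : (1 : ℝ) ≤ D - 1 := by
    have : (2 : ℝ) ≤ D := by exact_mod_cast hD
    linarith
  unfold cConst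
  apply lt_min <;> positivity

lemma cConst_le_sq_div_twenty {D : ℕ} {β : ℝ} (hD : 2 ≤ D) (hβ : 0 < β) (hβ1 : β ≤ 1) :
    cConst D β ≤ β ^ 2 / 20 := by
  have hQ : (1 : ℝ) ≤ ((D : ℝ) - 1) ^ 4 := by
    have : (2 : ℝ) ≤ D := by exact_mod_cast hD
    exact one_le_pow₀ (by linarith)
  set Q4 := ((D : ℝ) - 1) ^ 4
  calc cConst D β ≤ β / Q4 / (1 + 6 * Q4 / β) ^ 2 := min_le_right _ _
    _ ≤ β / Q4 / (6 * Q4 / β) ^ 2 := by gcongr; linarith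
    _ = β ^ 3 / (36 * Q4 ^ 3) := by field_simp; ring
    _ ≤ β ^ 2 / 20 := by
        rw [div_le_div_iff₀ (by positivity) (by norm_num)]
        nlinarith [one_le_pow₀ (n := 3) hQ, mul_le_mul_of_nonneg_left hβ1 (sq_nonneg β)]

theorem nonbacktracking_mixing_general {V : Type*} [Fintype V] [DecidableEq V]
    (G : SimpleGraph V) [DecidableRel G.Adj]
    (hconn : G.Connected)
    (D : ℕ) (hdeg : ∀ x : V, 3 ≤ G.degree x ∧ G.degree x ≤ D)
    (β : ℝ) (hβ : 0 < β)
    (hspec : ∀ f : V → ℂ, (∑ x : V, f x * (G.degree x : ℂ)) = 0 →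
      0 ≤ (∑ x : V, (starRingEnd ℂ) (f x) * lapP G (lapP G f) x * (G.degree x : ℂ)).re ∧
      (∑ x : V, (starRingEnd ℂ) (f x) * lapP G (lapP G f) x * (G.degree x : ℂ)).re ≤
        (1 - β) * ∑ x : V, ‖f x‖ ^ 2 * (G.degree x : ℝ)) :
    0 < cConst D β ∧
    ∀ φ : G.Dart → ℂ, (∑ e : G.Dart, φ e) = 0 →
      0 ≤ (∑ e : G.Dart, (starRingEnd ℂ) (φ e) *
            ∑ e' : G.Dart, (SstarSqSq G e e' : ℂ) * φ e').re ∧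
      (∑ e : G.Dart, (starRingEnd ℂ) (φ e) *
            ∑ e' : G.Dart, (SstarSqSq G e e' : ℂ) * φ e').re ≤
        (1 - cConst D β) * ∑ e : G.Dart, ‖φ e‖ ^ 2 := by
  have hgap (g : V → ℝ) (hg : ∑ x, g x * G.degree x = 0) :
      ∑ x, G.walkAvg g x ^ 2 * G.degree x ≤ (1 - β) * ∑ x, g x ^ 2 * G.degree x := by
    have := (hspec (fun x => g x) (by exact_mod_cast congrArg Complex.ofReal hg)).2
    rw [re_sum_conj_mul_lapP_lapP_ofReal] at this
    simpa using this
  have hdeg3 (x : V) : 3 ≤ G.degree x := (hdeg x).1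
  obtain ⟨x⟩ := hconn.nonempty
  obtain ⟨y, hxy⟩ := G.degree_pos_iff_exists_adj x |>.1 (by linarith [hdeg3 x])
  have hD : 2 ≤ D := by linarith [hdeg x]
  have hβ1 : β ≤ 1 := G.le_one_of_sum_sq_walkAvg_le hxy hgap
  refine ⟨cConst_pos hD hβ, fun φ hφ => ?_⟩
  rw [SstarSqSq_eq_transpose_mul_self, re_sum_conj_mul_sum_ofReal_mul,
    dotProduct_transpose_mul_self_mulVec, dotProduct_transpose_mul_self_mulVec, ← mulVec_mulVec,
    ← mulVec_mulVec, sum_norm_sq_eq_sum_re_sq_add_sum_im_sq]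
  have hre := sum_sq_Smat_mulVec_Smat_mulVec_le G hdeg3 hβ hβ1 hgap
    (fun e => (φ e).re) (by simpa using congrArg Complex.re hφ)
  have him := sum_sq_Smat_mulVec_Smat_mulVec_le G hdeg3 hβ hβ1 hgap
    (fun e => (φ e).im) (by simpa using congrArg Complex.im hφ)
  refine ⟨by positivity, ?_⟩
  calc _ ≤ (1 - β ^ 2 / 20) * (∑ e, (φ e).re ^ 2 + ∑ e, (φ e).im ^ 2) := by linarith
    _ ≤ _ := by
        gcongr
        exact cConst_le_sq_div_twenty hD hβ hβ1

/-- Theorem 1, mixing of the non-backtracking walk: let `G` be a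
finite connected non-bipartite graph with `3 ≤ D(x) ≤ D`, and suppose the
spectrum of `P²` on `ℓ²ₒ(V,π)` is contained in `[0, 1-β]`, `β > 0` (expressed by
the equivalent quadratic-form bounds). Then the spectrum of `S*²S²` on
`ℓ²ₒ(B,U)` is contained in `[0, 1 - c(D,β)]`; in particular `c(D,β) > 0`. -/
theorem nonbacktracking_mixing {V : Type*} [Fintype V] [DecidableEq V]
    (G : SimpleGraph V) [DecidableRel G.Adj]
    (hconn : G.Connected) (hnb : ¬ G.Colorable 2)
    (D : ℕ) (hdeg : ∀ x : V, 3 ≤ G.degree x ∧ G.degree x ≤ D)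
    (β : ℝ) (hβ : 0 < β)
    (hspec : ∀ f : V → ℂ, (∑ x : V, f x * (G.degree x : ℂ)) = 0 →
      0 ≤ (∑ x : V, (starRingEnd ℂ) (f x) * lapP G (lapP G f) x * (G.degree x : ℂ)).re ∧
      (∑ x : V, (starRingEnd ℂ) (f x) * lapP G (lapP G f) x * (G.degree x : ℂ)).re ≤
        (1 - β) * ∑ x : V, ‖f x‖ ^ 2 * (G.degree x : ℝ)) :
    0 < cConst D β ∧
    ∀ φ : G.Dart → ℂ, (∑ e : G.Dart, φ e) = 0 →
      0 ≤ (∑ e : G.Dart, (starRingEnd ℂ) (φ e) *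
            ∑ e' : G.Dart, (SstarSqSq G e e' : ℂ) * φ e').re ∧
      (∑ e : G.Dart, (starRingEnd ℂ) (φ e) *
            ∑ e' : G.Dart, (SstarSqSq G e e' : ℂ) * φ e').re ≤
        (1 - cConst D β) * ∑ e : G.Dart, ‖φ e‖ ^ 2 :=
  nonbacktracking_mixing_general G hconn D hdeg β hβ hspec
end

section
/- Converse spectral gap implication: if G has degrees 3 ≤ D(x) ≤ D and the spectrum of S*²S² on ℓ²_o(B,U) (respectively ℓ²(B,U) in the infinite case) is contained in [0, 1−c], then the spectrum of P² on ℓ²_o(V,π) (resp. ℓ²(V,π)) is contained in [0, 1 − D^{−2}c]. Concretely: for any f with Σ f(x)D(x)=0, letting G(e) = f(t(e)), one has ⟨G, (I − S*²S²)G⟩_{ℓ²(B,U)} ≤ D² ⟨f, (I − P²)f⟩_{ℓ²(V,π)}. -/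
open Finset Matrix

/-!
Lift `f` to darts by `g e = f e.snd`. Then `S g e = f e.fst` and
`S² g e = (D x - 1)⁻¹ (D x · P f x - f y)` for `e = (x, y)`. Write
`Var x = ∑_{y ∼ x} |f y - P f x|²`. Since the deviations `f y - P f x` sum to zero,
Pythagoras at each vertex gives
`‖g‖² = ‖f‖²_π = ∑ₓ (D x |P f x|² + Var x)`,
`‖S² g‖² = ∑ₓ (D x |P f x|² + Var x / (D x - 1)²)` and
`⟨f, P² f⟩_π = ‖P f‖²_π = ∑ₓ D x |P f x|²`, so
`⟨g, (I - S*²S²) g⟩ = ∑ₓ (1 - (D x - 1)⁻²) Var x ≤ ∑ₓ Var x = ⟨f, (I - P²) f⟩_π`.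
The spectral bound follows, as `g` sums to zero whenever `∑ f D = 0`.
-/

theorem sum_norm_add_sq_of_sum_eq_zero {ι F : Type*} [SeminormedAddCommGroup F]
    [InnerProductSpace ℝ F] (s : Finset ι) (a : F) (u : ι → F) (hu : ∑ i ∈ s, u i = 0) :
    ∑ i ∈ s, ‖a + u i‖ ^ 2 = #s * ‖a‖ ^ 2 + ∑ i ∈ s, ‖u i‖ ^ 2 := by
  have hcross : ∑ i ∈ s, inner ℝ a (u i) = 0 := by rw [← inner_sum, hu, inner_zero_right]
  simp only [norm_add_sq_real, sum_add_distrib, ← mul_sum, hcross, sum_const, nsmul_eq_mul]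
  ring

theorem re_star_dotProduct_conjTranspose_mul_mulVec {𝕜 m n : Type*} [RCLike 𝕜] [Fintype m]
    [Fintype n] (N : Matrix m n 𝕜) (φ : n → 𝕜) :
    RCLike.re (star φ ⬝ᵥ ((Nᴴ * N) *ᵥ φ)) = ∑ i, ‖(N *ᵥ φ) i‖ ^ 2 := by
  rw [← mulVec_mulVec, dotProduct_mulVec, ← star_mulVec]
  simp only [dotProduct, Pi.star_apply, RCLike.star_def, RCLike.conj_mul, map_sum]
  norm_cast

theorem Matrix.map_ofReal_mul {l m n : Type*} [Fintype m] (A : Matrix l m ℝ) (B : Matrix m n ℝ) :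
    (A * B).map ((↑) : ℝ → ℂ) = (A.map (↑) : Matrix l m ℂ) * (B.map (↑) : Matrix m n ℂ) :=
  Matrix.map_mul (f := Complex.ofRealHom)

namespace SimpleGraph

def dartEquivSigmaNeighborSet {V : Type*} (G : SimpleGraph V) :
    G.Dart ≃ Σ v : V, G.neighborSet v where
  toFun d := ⟨d.fst, d.snd, d.adj⟩
  invFun s := ⟨(s.fst, s.snd), s.snd.property⟩
  left_inv d := by ext <;> rfl
  right_inv s := by ext <;> rfl

section DartSums

variable {V : Type*} [Fintype V] (G : SimpleGraph V) [DecidableRel G.Adj] {M : Type*}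
  [AddCommMonoid M]

theorem sum_dart_eq_sum_neighborFinset (g : V → V → M) :
    ∑ e : G.Dart, g e.fst e.snd = ∑ x, ∑ y ∈ G.neighborFinset x, g x y := by
  rw [← (dartEquivSigmaNeighborSet G).symm.sum_comp, ← univ_sigma_univ, sum_sigma]
  refine sum_congr rfl fun x _ => ?_
  rw [neighborFinset_def]
  exact sum_set_coe (f := g x) (G.neighborSet x)

theorem sum_dart_swap (g : V → V → M) :
    ∑ e : G.Dart, g e.fst e.snd = ∑ e : G.Dart, g e.snd e.fst :=
  Fintype.sum_equiv (Dart.symm_involutive.toPerm _) _ _ fun _ => rfl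

theorem sum_dart_snd_eq_sum_neighborFinset (g : V → M) :
    ∑ e : G.Dart, g e.snd = ∑ x, ∑ y ∈ G.neighborFinset x, g y :=
  G.sum_dart_eq_sum_neighborFinset fun _ y => g y

theorem sum_dart_snd (g : V → M) : ∑ e : G.Dart, g e.snd = ∑ x, G.degree x • g x := by
  rw [G.sum_dart_swap fun _ y => g y, G.sum_dart_eq_sum_neighborFinset fun x _ => g x]
  simp only [sum_const, card_neighborFinset_eq_degree]

theorem sum_dart_norm_sq_snd {E : Type*} [SeminormedAddGroup E] (f : V → E) :
    ∑ e : G.Dart, ‖f e.snd‖ ^ 2 = ∑ x, ‖f x‖ ^ 2 * (G.degree x : ℝ) := by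
  simp only [G.sum_dart_snd fun x => ‖f x‖ ^ 2, nsmul_eq_mul, mul_comm]

end DartSums

section RandomWalk

variable {V : Type*} [Fintype V] [DecidableEq V] (G : SimpleGraph V) [DecidableRel G.Adj]

theorem lapP_mul_degree (f : V → ℂ) (x : V) :
    lapP G f x * G.degree x = ∑ y ∈ G.neighborFinset x, f y := by
  rcases eq_or_ne (G.degree x) 0 with hx | hx
  · have hN : G.neighborFinset x = ∅ := by rw [← card_eq_zero, card_neighborFinset_eq_degree, hx]
    simp [hN, hx]
  · rw [lapP, mul_right_comm, inv_mul_cancel₀ (Nat.cast_ne_zero.2 hx), one_mul]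

theorem sum_neighborFinset_sub_lapP (f : V → ℂ) (x : V) :
    ∑ y ∈ G.neighborFinset x, (f y - lapP G f x) = 0 := by
  rw [sum_sub_distrib, ← lapP_mul_degree, sum_const, card_neighborFinset_eq_degree, nsmul_eq_mul,
    mul_comm, sub_self]

noncomputable def neighborVariance (f : V → ℂ) (x : V) : ℝ :=
  ∑ y ∈ G.neighborFinset x, ‖f y - lapP G f x‖ ^ 2

theorem neighborVariance_nonneg (f : V → ℂ) (x : V) : 0 ≤ G.neighborVariance f x :=
  sum_nonneg fun _ _ => sq_nonneg _

theorem sum_neighborFinset_norm_sq (f : V → ℂ) (x : V) :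
    ∑ y ∈ G.neighborFinset x, ‖f y‖ ^ 2 =
      G.degree x * ‖lapP G f x‖ ^ 2 + G.neighborVariance f x := by
  have h := sum_norm_add_sq_of_sum_eq_zero _ (lapP G f x) _ (G.sum_neighborFinset_sub_lapP f x)
  simp only [add_sub_cancel, card_neighborFinset_eq_degree] at h
  exact h

theorem sum_norm_sq_mul_degree (f : V → ℂ) :
    ∑ x, ‖f x‖ ^ 2 * (G.degree x : ℝ) =
      ∑ x, G.degree x * ‖lapP G f x‖ ^ 2 + ∑ x, G.neighborVariance f x := by
  rw [← sum_dart_norm_sq_snd, G.sum_dart_snd_eq_sum_neighborFinset fun x => ‖f x‖ ^ 2]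
  simp only [sum_neighborFinset_norm_sq, sum_add_distrib]

theorem re_sum_conj_mul_lapP_lapP_mul_degree (f : V → ℂ) :
    (∑ x, (starRingEnd ℂ) (f x) * lapP G (lapP G f) x * (G.degree x : ℂ)).re =
      ∑ x, G.degree x * ‖lapP G f x‖ ^ 2 := by
  have hself_adjoint : ∑ x, (starRingEnd ℂ) (f x) * lapP G (lapP G f) x * (G.degree x : ℂ) =
      ∑ x, lapP G f x * (starRingEnd ℂ) (lapP G f x * G.degree x) :=
    calc _ = ∑ x, ∑ y ∈ G.neighborFinset x, (starRingEnd ℂ) (f x) * lapP G f y := by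
          simp only [mul_assoc, lapP_mul_degree, mul_sum]
      _ = ∑ x, ∑ y ∈ G.neighborFinset x, lapP G f x * (starRingEnd ℂ) (f y) := by
          rw [← G.sum_dart_eq_sum_neighborFinset fun x y => (starRingEnd ℂ) (f x) * lapP G f y,
            G.sum_dart_swap fun x y => (starRingEnd ℂ) (f x) * lapP G f y,
            G.sum_dart_eq_sum_neighborFinset fun x y => (starRingEnd ℂ) (f y) * lapP G f x]
          simp only [mul_comm]
      _ = _ := by simp only [lapP_mul_degree, map_sum, mul_sum]
  rw [hself_adjoint, Complex.re_sum]
  refine sum_congr rfl fun x _ => ?_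
  rw [map_mul, Complex.conj_natCast, ← mul_assoc, Complex.mul_conj', ← Complex.ofReal_pow,
    ← Complex.ofReal_natCast, ← Complex.ofReal_mul, Complex.ofReal_re, mul_comm]

theorem re_sum_conj_mul_sub_lapP_lapP_mul_degree (f : V → ℂ) :
    (∑ x, (starRingEnd ℂ) (f x) * (f x - lapP G (lapP G f) x) * (G.degree x : ℂ)).re =
      ∑ x, G.neighborVariance f x := by
  have h := G.sum_norm_sq_mul_degree f
  rw [← re_sum_conj_mul_lapP_lapP_mul_degree] at h
  rw [eq_sub_of_add_eq' h.symm]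
  simp only [mul_sub, sub_mul, sum_sub_distrib, Complex.sub_re, Complex.conj_mul']
  norm_cast

end RandomWalk

section NonBacktracking

variable {V : Type*} [Fintype V] [DecidableEq V] (G : SimpleGraph V) [DecidableRel G.Adj]

theorem Smat_map_mulVec (h : V → V → ℂ) (e : G.Dart) :
    ((Smat G).map (↑) *ᵥ fun e' => h e'.fst e'.snd) e =
      (((G.degree e.fst : ℝ) - 1)⁻¹ : ℝ) *
        ∑ y ∈ (G.neighborFinset e.fst).erase e.snd, h y e.fst := by
  simp only [mulVec, dotProduct, Matrix.map_apply, Smat, apply_ite Complex.ofReal,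
    Complex.ofReal_zero, ite_mul, zero_mul, ← sum_filter, ← mul_sum]
  congr 1
  refine sum_bij (fun e' _ => e'.fst) ?_ ?_ ?_ ?_
  · rintro e' he'
    simp only [mem_filter, mem_univ, true_and] at he'
    obtain ⟨hsnd, hne⟩ := he'
    refine mem_erase.2 ⟨fun hfst => hne ?_, (mem_neighborFinset _ _ _).2 ?_⟩
    · exact Dart.ext _ _ (Prod.ext hsnd hfst)
    · exact hsnd ▸ e'.adj.symm
  · rintro e₁ he₁ e₂ he₂ hfst
    simp only [mem_filter, mem_univ, true_and] at he₁ he₂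
    exact Dart.ext _ _ (Prod.ext hfst (he₁.1.trans he₂.1.symm))
  · intro y hy
    obtain ⟨hne, hadj⟩ := mem_erase.1 hy
    refine ⟨⟨(y, e.fst), ((mem_neighborFinset _ _ _).1 hadj).symm⟩, ?_, rfl⟩
    refine mem_filter.2 ⟨mem_univ _, rfl, fun h => hne ?_⟩
    exact congrArg (·.snd) h
  · intro e' he'
    simp only [mem_filter, mem_univ, true_and] at he'
    rw [he'.1]

theorem Smat_map_mulVec_snd {e : G.Dart} (he : 2 ≤ G.degree e.fst) (f : V → ℂ) :
    ((Smat G).map (↑) *ᵥ fun e' => f e'.snd) e = f e.fst := by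
  have hd : ((G.degree e.fst : ℂ) - 1) ≠ 0 :=
    sub_ne_zero.2 (by exact_mod_cast (by omega : G.degree e.fst ≠ 1))
  rw [G.Smat_map_mulVec fun _ y => f y, sum_const,
    card_erase_of_mem ((mem_neighborFinset _ _ _).2 e.adj), card_neighborFinset_eq_degree,
    nsmul_eq_mul, Nat.cast_sub (by omega)]
  push_cast
  exact inv_mul_cancel_left₀ hd _

theorem Smat_map_mulVec_fst (f : V → ℂ) (e : G.Dart) :
    ((Smat G).map (↑) *ᵥ fun e' => f e'.fst) e =
      (((G.degree e.fst : ℝ) - 1)⁻¹ : ℝ) * (lapP G f e.fst * G.degree e.fst - f e.snd) := by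
  rw [G.Smat_map_mulVec fun x _ => f x, sum_erase_eq_sub ((mem_neighborFinset _ _ _).2 e.adj),
    lapP_mul_degree]

theorem Smat_mul_Smat_map_mulVec_snd (hdeg : ∀ x, 2 ≤ G.degree x) (f : V → ℂ) (e : G.Dart) :
    ((Smat G * Smat G).map (↑) *ᵥ fun e' => f e'.snd) e =
      (((G.degree e.fst : ℝ) - 1)⁻¹ : ℝ) * (lapP G f e.fst * G.degree e.fst - f e.snd) := by
  have hS : ((Smat G).map (↑) *ᵥ fun e' => f e'.snd) = fun e' => f e'.fst :=
    funext fun e' => G.Smat_map_mulVec_snd (hdeg _) f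
  rw [map_ofReal_mul, ← mulVec_mulVec, hS, Smat_map_mulVec_fst]

theorem SstarSqSq_map :
    (SstarSqSq G).map (↑) =
      (((Smat G * Smat G).map (↑))ᴴ * (Smat G * Smat G).map (↑) : Matrix G.Dart G.Dart ℂ) := by
  rw [SstarSqSq, ← transpose_mul, map_ofReal_mul,
    ← conjTranspose_eq_transpose_of_trivial, conjTranspose_map _ fun r => by simp]

theorem sum_neighborFinset_norm_inv_mul_sq {x : V} (hx : 2 ≤ G.degree x) (f : V → ℂ) :
    ∑ y ∈ G.neighborFinset x,
        ‖(((G.degree x : ℝ) - 1)⁻¹ : ℝ) * (lapP G f x * G.degree x - f y)‖ ^ 2 =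
      G.degree x * ‖lapP G f x‖ ^ 2 + G.neighborVariance f x / ((G.degree x : ℝ) - 1) ^ 2 := by
  have hd : (G.degree x : ℝ) - 1 ≠ 0 :=
    sub_ne_zero.2 (by exact_mod_cast (by omega : G.degree x ≠ 1))
  have hu : ∑ y ∈ G.neighborFinset x, (lapP G f x - f y) = 0 := by
    rw [← neg_eq_zero, ← sum_neg_distrib]
    simpa only [neg_sub] using G.sum_neighborFinset_sub_lapP f x
  have hsplit : ∀ y, lapP G f x * G.degree x - f y =
      (((G.degree x : ℝ) - 1 : ℝ) : ℂ) * lapP G f x + (lapP G f x - f y) := fun y => by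
    push_cast; ring
  simp only [norm_mul, mul_pow, ← mul_sum, hsplit,
    sum_norm_add_sq_of_sum_eq_zero _ _ _ hu, norm_sub_rev (lapP G f x), Complex.norm_real,
    Real.norm_eq_abs, sq_abs, card_neighborFinset_eq_degree, neighborVariance]
  field_simp

theorem re_sum_conj_mul_SstarSqSq_snd (hdeg : ∀ x, 2 ≤ G.degree x) (f : V → ℂ) :
    (∑ e : G.Dart, (starRingEnd ℂ) (f e.snd) *
        ∑ e' : G.Dart, (SstarSqSq G e e' : ℂ) * f e'.snd).re =
      ∑ x, G.degree x * ‖lapP G f x‖ ^ 2 +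
        ∑ x, G.neighborVariance f x / ((G.degree x : ℝ) - 1) ^ 2 := by
  change RCLike.re (star (fun e => f e.snd) ⬝ᵥ ((SstarSqSq G).map (↑) *ᵥ fun e => f e.snd)) = _
  rw [SstarSqSq_map, re_star_dotProduct_conjTranspose_mul_mulVec]
  simp only [Smat_mul_Smat_map_mulVec_snd G hdeg]
  rw [G.sum_dart_eq_sum_neighborFinset fun x y =>
    ‖(((G.degree x : ℝ) - 1)⁻¹ : ℝ) * (lapP G f x * G.degree x - f y)‖ ^ 2]
  simp only [sum_neighborFinset_norm_inv_mul_sq G (hdeg _), sum_add_distrib]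

theorem re_sum_conj_mul_sub_SstarSqSq_snd (hdeg : ∀ x, 2 ≤ G.degree x) (f : V → ℂ) :
    (∑ e : G.Dart, (starRingEnd ℂ) (f e.snd) *
        (f e.snd - ∑ e' : G.Dart, (SstarSqSq G e e' : ℂ) * f e'.snd)).re =
      ∑ x, G.neighborVariance f x - ∑ x, G.neighborVariance f x / ((G.degree x : ℝ) - 1) ^ 2 := by
  simp only [mul_sub, sum_sub_distrib, Complex.sub_re, re_sum_conj_mul_SstarSqSq_snd G hdeg,
    Complex.conj_mul']
  norm_cast
  rw [sum_dart_norm_sq_snd, sum_norm_sq_mul_degree]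
  ring

end NonBacktracking

end SimpleGraph

theorem converse_spectral_gap_general {V : Type*} [Fintype V] [DecidableEq V]
    (G : SimpleGraph V) [DecidableRel G.Adj]
    (D : ℕ) (hdeg : ∀ x : V, 3 ≤ G.degree x ∧ G.degree x ≤ D) :
    (∀ f : V → ℂ, (∑ x : V, f x * (G.degree x : ℂ)) = 0 →
      (∑ e : G.Dart, (starRingEnd ℂ) (f e.snd) *
          (f e.snd - ∑ e' : G.Dart, (SstarSqSq G e e' : ℂ) * f e'.snd)).re ≤
        (D : ℝ) ^ 2 * (∑ x : V, (starRingEnd ℂ) (f x) *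
          (f x - lapP G (lapP G f) x) * (G.degree x : ℂ)).re) ∧
    (∀ c : ℝ,
      (∀ φ : G.Dart → ℂ, (∑ e : G.Dart, φ e) = 0 →
        0 ≤ (∑ e : G.Dart, (starRingEnd ℂ) (φ e) *
              ∑ e' : G.Dart, (SstarSqSq G e e' : ℂ) * φ e').re ∧
        (∑ e : G.Dart, (starRingEnd ℂ) (φ e) *
              ∑ e' : G.Dart, (SstarSqSq G e e' : ℂ) * φ e').re ≤
          (1 - c) * ∑ e : G.Dart, ‖φ e‖ ^ 2) →
      ∀ f : V → ℂ, (∑ x : V, f x * (G.degree x : ℂ)) = 0 →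
        0 ≤ (∑ x : V, (starRingEnd ℂ) (f x) * lapP G (lapP G f) x * (G.degree x : ℂ)).re ∧
        (∑ x : V, (starRingEnd ℂ) (f x) * lapP G (lapP G f) x * (G.degree x : ℂ)).re ≤
          (1 - c / (D : ℝ) ^ 2) * ∑ x : V, ‖f x‖ ^ 2 * (G.degree x : ℝ)) := by
  have hdeg₂ : ∀ x, 2 ≤ G.degree x := fun x => by have := hdeg x; omega
  have hvar : ∀ f : V → ℂ, ∑ x, G.neighborVariance f x ≤ D ^ 2 * ∑ x, G.neighborVariance f x :=
    fun f => by
      rw [mul_sum]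
      refine sum_le_sum fun x _ => le_mul_of_one_le_left (G.neighborVariance_nonneg f x) ?_
      exact one_le_pow₀ (by exact_mod_cast (by have := hdeg x; omega : 1 ≤ D))
  have hvar_div : ∀ f : V → ℂ, 0 ≤ ∑ x, G.neighborVariance f x / ((G.degree x : ℝ) - 1) ^ 2 :=
    fun f => sum_nonneg fun x _ => div_nonneg (G.neighborVariance_nonneg f x) (sq_nonneg _)
  refine ⟨fun f _ => ?_, fun c hc f hf => ?_⟩
  · rw [G.re_sum_conj_mul_sub_SstarSqSq_snd hdeg₂, G.re_sum_conj_mul_sub_lapP_lapP_mul_degree]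
    exact (sub_le_self _ (hvar_div f)).trans (hvar f)
  rcases isEmpty_or_nonempty V with _ | ⟨⟨x₀⟩⟩
  · simp
  have hD : (0 : ℝ) < D ^ 2 := pow_pos (by have := hdeg x₀; exact_mod_cast (by omega : 0 < D)) 2
  have hlift : ∑ e : G.Dart, f e.snd = 0 := by
    simpa only [G.sum_dart_snd f, nsmul_eq_mul, mul_comm] using hf
  have hS := (hc (fun e => f e.snd) hlift).2
  rw [G.re_sum_conj_mul_SstarSqSq_snd hdeg₂, G.sum_dart_norm_sq_snd, G.sum_norm_sq_mul_degree] at hS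
  rw [G.re_sum_conj_mul_lapP_lapP_mul_degree, G.sum_norm_sq_mul_degree]
  refine ⟨sum_nonneg fun x _ => by positivity, ?_⟩
  have hgap : c * (∑ x, G.degree x * ‖lapP G f x‖ ^ 2 + ∑ x, G.neighborVariance f x) ≤
      D ^ 2 * ∑ x, G.neighborVariance f x := by
    linarith [hvar f, hvar_div f]
  rw [sub_mul, one_mul, div_mul_eq_mul_div, le_sub_comm, div_le_iff₀ hD, add_sub_cancel_left]
  linarith

/-- converse spectral gap implication: for `3 ≤ D(x) ≤ D`,
(a) for every `f` with `∑ f(x)D(x) = 0`, taking `G(e) = f(t(e))` one has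
`⟨G, (I - S*²S²) G⟩_{ℓ²(B,U)} ≤ D² ⟨f, (I - P²) f⟩_{ℓ²(V,π)}`; consequently
(b) if the spectrum of `S*²S²` on `ℓ²ₒ(B,U)` is contained in `[0, 1-c]`, then
the spectrum of `P²` on `ℓ²ₒ(V,π)` is contained in `[0, 1 - D⁻²c]` (both
spectral inclusions expressed by the equivalent quadratic-form bounds). -/
theorem converse_spectral_gap {V : Type*} [Fintype V] [DecidableEq V]
    (G : SimpleGraph V) [DecidableRel G.Adj]
    (hconn : G.Connected) (hnb : ¬ G.Colorable 2)
    (D : ℕ) (hdeg : ∀ x : V, 3 ≤ G.degree x ∧ G.degree x ≤ D) :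
    (∀ f : V → ℂ, (∑ x : V, f x * (G.degree x : ℂ)) = 0 →
      (∑ e : G.Dart, (starRingEnd ℂ) (f e.snd) *
          (f e.snd - ∑ e' : G.Dart, (SstarSqSq G e e' : ℂ) * f e'.snd)).re ≤
        (D : ℝ) ^ 2 * (∑ x : V, (starRingEnd ℂ) (f x) *
          (f x - lapP G (lapP G f) x) * (G.degree x : ℂ)).re) ∧
    (∀ c : ℝ,
      (∀ φ : G.Dart → ℂ, (∑ e : G.Dart, φ e) = 0 →
        0 ≤ (∑ e : G.Dart, (starRingEnd ℂ) (φ e) *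
              ∑ e' : G.Dart, (SstarSqSq G e e' : ℂ) * φ e').re ∧
        (∑ e : G.Dart, (starRingEnd ℂ) (φ e) *
              ∑ e' : G.Dart, (SstarSqSq G e e' : ℂ) * φ e').re ≤
          (1 - c) * ∑ e : G.Dart, ‖φ e‖ ^ 2) →
      ∀ f : V → ℂ, (∑ x : V, f x * (G.degree x : ℂ)) = 0 →
        0 ≤ (∑ x : V, (starRingEnd ℂ) (f x) * lapP G (lapP G f) x * (G.degree x : ℂ)).re ∧
        (∑ x : V, (starRingEnd ℂ) (f x) * lapP G (lapP G f) x * (G.degree x : ℂ)).re ≤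
          (1 - c / (D : ℝ) ^ 2) * ∑ x : V, ‖f x‖ ^ 2 * (G.degree x : ℝ)) :=
  converse_spectral_gap_general G D hdeg
end

section
/- With the notation of the Green function identities on the universal covering tree: for any neighbors v, w, one has ζ^z(w,v) = (m^z(w)/m^z(v)) ζ^z(v,w) and 1/ζ^z(w,v) − ζ^z(v,w) = 2m^z(v). -/
/-!
The weighted adjacency operator `A` of a graph of bounded degree, with real, symmetric and
bounded weights, is symmetric on `ℓ²`; hence `Im ⟪f, (A - z) f⟫ = -Im z * ‖f‖²`.
For non-real `z` this forces `ℓ²` solutions of `A f = z f` to vanish, makes the Green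
function symmetric and keeps its diagonal away from zero.

Removing the edge `vw` from a tree separates `v` from `w`, so a Green function `g` of the cut tree
satisfies `g w v = g v w = 0`. The resolvent identity `g = G + g E G`, with `E` the adjacency
matrix of the single edge `vw`, evaluated at `(w, v)`, `(v, w)` and `(v, v)` for the two Green
functions `gdel v w` and `gdel w v` of the cut tree, gives three linear relations with the entries
of `G`, and both identities follow from them by algebra.
-/

open Finset

/-- `g` is the Green function of the adjacency operator of `T` at `z`. -/
def IsGreen {V : Type*} [DecidableEq V] (T : SimpleGraph V) [T.LocallyFinite]
    (z : ℂ) (g : V → V → ℂ) : Prop :=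
  (∀ y : V, Summable fun x : V => ‖g x y‖ ^ 2) ∧
  (∀ x y : V, (∑ u ∈ T.neighborFinset x, g u y) - z * g x y =
    if x = y then 1 else 0)

/-- `g` is the Green function of `T` with the single edge `{a, b}` removed. -/
def IsGreenDel {V : Type*} [DecidableEq V] (T : SimpleGraph V) [T.LocallyFinite]
    (a b : V) (z : ℂ) (g : V → V → ℂ) : Prop :=
  (∀ y : V, Summable fun x : V => ‖g x y‖ ^ 2) ∧
  (∀ x y : V, (∑ u ∈ T.neighborFinset x,
      if (x = a ∧ u = b) ∨ (x = b ∧ u = a) then 0 else g u y) - z * g x y =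
    if x = y then 1 else 0)

open ComplexConjugate

theorem memℓp_two_iff {ι E : Type*} [NormedAddCommGroup E] {f : ι → E} :
    Memℓp f 2 ↔ Summable fun i => ‖f i‖ ^ 2 := by
  rw [memℓp_gen_iff (by norm_num)]
  norm_num

theorem Memℓp.summable_norm_mul {ι E : Type*} [NormedAddCommGroup E] {f g : ι → E}
    (hf : Memℓp f 2) (hg : Memℓp g 2) : Summable fun i => ‖f i‖ * ‖g i‖ :=
  lp.summable_mul (p := 2) (q := 2) (by simpa using Real.HolderConjugate.two_two)
    ⟨f, hf⟩ ⟨g, hg⟩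

theorem Memℓp.summable_mul {ι : Type*} {f g : ι → ℂ} (hf : Memℓp f 2) (hg : Memℓp g 2) :
    Summable fun i => f i * g i :=
  .of_norm <| by simpa only [norm_mul] using hf.summable_norm_mul hg

namespace SimpleGraph

variable {V : Type*} {T : SimpleGraph V} [T.LocallyFinite]

variable (T) in
def dartEquivSigma : T.Dart ≃ Σ x, {u // u ∈ T.neighborFinset x} where
  toFun d := ⟨d.fst, d.snd, (T.mem_neighborFinset _ _).2 d.adj⟩
  invFun p := ⟨(p.1, p.2), (T.mem_neighborFinset _ _).1 p.2.2⟩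
  left_inv _ := rfl
  right_inv _ := rfl

theorem hasSum_sum_neighborFinset {α : Type*} [AddCommMonoid α] [TopologicalSpace α]
    [ContinuousAdd α] [RegularSpace α] {F : V → V → α} {a : α}
    (h : HasSum (fun d : T.Dart => F d.fst d.snd) a) :
    HasSum (fun x => ∑ u ∈ T.neighborFinset x, F x u) a := by
  refine HasSum.sigma ((T.dartEquivSigma.symm.hasSum_iff).2 h) fun x => ?_
  convert hasSum_fintype _ using 1
  exact (sum_coe_sort _ _).symm

theorem memℓp_comp_dart_fst {E : Type*} [NormedAddCommGroup E] {D : ℕ}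
    (hD : ∀ x, T.degree x ≤ D) {f : V → E} (hf : Memℓp f 2) :
    Memℓp (fun d : T.Dart => f d.fst) 2 := by
  rw [memℓp_two_iff] at hf ⊢
  refine (T.dartEquivSigma.symm.summable_iff (f := fun d : T.Dart => ‖f d.fst‖ ^ 2)).1 ?_
  refine (summable_sigma_of_nonneg fun _ => sq_nonneg _).2 ⟨fun _ => .of_finite, ?_⟩
  refine (hf.mul_left (D : ℝ)).of_nonneg_of_le (fun _ => tsum_nonneg fun _ => sq_nonneg _)
    fun x => ?_
  simp only [dartEquivSigma, Equiv.coe_fn_symm_mk, tsum_const,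
    Nat.card_eq_fintype_card, Fintype.card_coe, card_neighborFinset_eq_degree, nsmul_eq_mul]
  gcongr
  exact_mod_cast hD x

theorem memℓp_comp_dart_snd {E : Type*} [NormedAddCommGroup E] {D : ℕ}
    (hD : ∀ x, T.degree x ≤ D) {f : V → E} (hf : Memℓp f 2) :
    Memℓp (fun d : T.Dart => f d.snd) 2 := by
  have := memℓp_two_iff.1 (memℓp_comp_dart_fst hD hf)
  exact memℓp_two_iff.2 <| (Dart.symm_involutive.toPerm _).summable_iff.2 this

variable (T) in
def weightedAdj (c : V → V → ℝ) : (V → ℂ) →ₗ[ℂ] V → ℂ where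
  toFun f x := ∑ u ∈ T.neighborFinset x, (c x u : ℂ) * f u
  map_add' f g := by ext x; simp [mul_add, sum_add_distrib]
  map_smul' a f := by
    ext x
    simp only [Pi.smul_apply, smul_eq_mul, RingHom.id_apply, mul_sum]
    exact sum_congr rfl fun _ _ => mul_left_comm _ _ _

theorem weightedAdj_apply (c : V → V → ℝ) (f : V → ℂ) (x : V) :
    T.weightedAdj c f x = ∑ u ∈ T.neighborFinset x, (c x u : ℂ) * f u := rfl

section

variable {D : ℕ} {c : V → V → ℝ} {K : ℝ} {f g : V → ℂ}

theorem hasSum_mul_weightedAdj (hD : ∀ x, T.degree x ≤ D) (hc : ∀ x u, |c x u| ≤ K)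
    (hf : Memℓp f 2) (hg : Memℓp g 2) :
    HasSum (fun x => f x * T.weightedAdj c g x)
      (∑' d : T.Dart, f d.fst * c d.fst d.snd * g d.snd) := by
  have hfg := (memℓp_comp_dart_fst hD hf).summable_norm_mul (memℓp_comp_dart_snd hD hg)
  have hsum : Summable fun d : T.Dart => f d.fst * c d.fst d.snd * g d.snd :=
    .of_norm_bounded (hfg.mul_left K) fun d => by
      rw [mul_right_comm, norm_mul, norm_mul, Complex.norm_real, Real.norm_eq_abs, mul_comm]
      exact mul_le_mul_of_nonneg_right (hc _ _) (by positivity)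
  convert hasSum_sum_neighborFinset (F := fun x u => f x * c x u * g u) hsum.hasSum using 1
  ext x
  simp only [weightedAdj_apply, mul_sum, mul_assoc]

theorem tsum_mul_weightedAdj_comm (hD : ∀ x, T.degree x ≤ D) (hc : ∀ x u, |c x u| ≤ K)
    (hcs : ∀ x u, c x u = c u x) (hf : Memℓp f 2) (hg : Memℓp g 2) :
    ∑' x, f x * T.weightedAdj c g x = ∑' x, g x * T.weightedAdj c f x := by
  rw [(hasSum_mul_weightedAdj hD hc hf hg).tsum_eq, (hasSum_mul_weightedAdj hD hc hg hf).tsum_eq,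
    ← (Dart.symm_involutive.toPerm _).tsum_eq]
  refine tsum_congr fun d => ?_
  simp only [Function.Involutive.coe_toPerm, Dart.symm, Prod.fst_swap, Prod.snd_swap,
    hcs d.snd d.fst]
  ring

theorem im_tsum_conj_mul_weightedAdj (hD : ∀ x, T.degree x ≤ D) (hc : ∀ x u, |c x u| ≤ K)
    (hcs : ∀ x u, c x u = c u x) (hf : Memℓp f 2) :
    (∑' x, conj (f x) * T.weightedAdj c f x).im = 0 := by
  rw [← Complex.conj_eq_iff_im, ← Complex.conjCLE_apply, Complex.conjCLE.map_tsum]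
  simp only [Complex.conjCLE_apply, map_mul, Complex.conj_conj, weightedAdj_apply, map_sum,
    Complex.conj_ofReal]
  exact tsum_mul_weightedAdj_comm hD hc hcs hf hf.star_mem
  

theorem eq_zero_of_im_tsum_conj_mul_eq_zero (hD : ∀ x, T.degree x ≤ D)
    (hc : ∀ x u, |c x u| ≤ K) (hcs : ∀ x u, c x u = c u x) {z : ℂ} (hz : z.im ≠ 0)
    (hf : Memℓp f 2) (h : (∑' x, conj (f x) * (T.weightedAdj c f x - z * f x)).im = 0) :
    f = 0 := by
  have hsq := memℓp_two_iff.1 hf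
  have hsplit : ∑' x, conj (f x) * (T.weightedAdj c f x - z * f x)
      = ∑' x, conj (f x) * T.weightedAdj c f x - z * ↑(∑' x, ‖f x‖ ^ 2) := by
    rw [Complex.ofReal_tsum, ← tsum_mul_left, ← Summable.tsum_sub
      (hasSum_mul_weightedAdj (f := fun x => conj (f x)) hD hc hf.star_mem hf).summable
      ((Complex.summable_ofReal.2 hsq).mul_left z)]
    refine tsum_congr fun x => ?_
    rw [Complex.ofReal_pow, ← Complex.conj_mul']
    ring
  rw [hsplit, Complex.sub_im, im_tsum_conj_mul_weightedAdj hD hc hcs hf, Complex.im_mul_ofReal,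
    zero_sub, neg_eq_zero, mul_eq_zero, or_iff_right hz] at h
  ext x
  exact norm_eq_zero.1 <| (pow_eq_zero_iff two_ne_zero).1 <|
    le_antisymm (h ▸ hsq.le_tsum x fun _ _ => sq_nonneg _) (sq_nonneg _)

theorem eq_zero_of_weightedAdj_eq_mul (hD : ∀ x, T.degree x ≤ D)
    (hc : ∀ x u, |c x u| ≤ K) (hcs : ∀ x u, c x u = c u x) {z : ℂ} (hz : z.im ≠ 0)
    (hf : Memℓp f 2) (h : ∀ x, T.weightedAdj c f x = z * f x) : f = 0 :=
  eq_zero_of_im_tsum_conj_mul_eq_zero hD hc hcs hz hf <| by simp [h]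

end

variable [DecidableEq V]

def deleteEdgeWeight (c : V → V → ℝ) (v w x u : V) : ℝ :=
  if s(x, u) = s(v, w) then 0 else c x u

theorem abs_deleteEdgeWeight_le {c : V → V → ℝ} {K : ℝ} (hc : ∀ x u, |c x u| ≤ K)
    (v w x u : V) : |deleteEdgeWeight c v w x u| ≤ K := by
  unfold deleteEdgeWeight
  split_ifs
  · simpa using (abs_nonneg _).trans (hc x u)
  · exact hc x u

theorem deleteEdgeWeight_symm {c : V → V → ℝ} (hcs : ∀ x u, c x u = c u x) (v w x u : V) :
    deleteEdgeWeight c v w x u = deleteEdgeWeight c v w u x := by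
  simp only [deleteEdgeWeight, Sym2.eq_swap, hcs x u]

theorem weightedAdj_eq_weightedAdj_deleteEdgeWeight_add {c : V → V → ℝ}
    (hcs : ∀ x u, c x u = c u x) {v w : V} (hvw : T.Adj v w) (f : V → ℂ) (x : V) :
    T.weightedAdj c f x = T.weightedAdj (deleteEdgeWeight c v w) f x +
      ((if x = v then c v w * f w else 0) + if x = w then c v w * f v else 0) := by
  have hsplit : ∀ u, (c x u : ℂ) * f u = deleteEdgeWeight c v w x u * f u +
      ((if x = v ∧ u = w then c v w * f w else 0) +
        if x = w ∧ u = v then c v w * f v else 0) := by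
    intro u
    by_cases h : s(x, u) = s(v, w)
    · rcases Sym2.eq_iff.1 h with ⟨rfl, rfl⟩ | ⟨rfl, rfl⟩
      · simp [deleteEdgeWeight, hvw.ne.symm]
      · simp [deleteEdgeWeight, hvw.ne.symm, hcs u x]
    · have h' : ¬(x = v ∧ u = w) ∧ ¬(x = w ∧ u = v) := by
        rw [Sym2.eq_iff, not_or] at h; exact h
      simp [deleteEdgeWeight, h, h'.1, h'.2]
  rw [weightedAdj_apply, weightedAdj_apply, sum_congr rfl fun u _ => hsplit u, sum_add_distrib,
    sum_add_distrib]
  congr 2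
  · by_cases hx : x = v <;> simp [hx, hvw]
  · by_cases hx : x = w <;> simp [hx, hvw.symm]

variable (T) in
def IsWeightedGreen (c : V → V → ℝ) (z : ℂ) (g : V → V → ℂ) : Prop :=
  (∀ y, Memℓp (fun x => g x y) 2) ∧
    ∀ x y, T.weightedAdj c (fun s => g s y) x - z * g x y = if x = y then 1 else 0

namespace IsWeightedGreen

variable {D : ℕ} {c : V → V → ℝ} {K : ℝ} {z : ℂ} {g : V → V → ℂ}

theorem weightedAdj_eq (hg : T.IsWeightedGreen c z g) (x y : V) :
    T.weightedAdj c (fun s => g s y) x = z * g x y + if x = y then 1 else 0 := by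
  rw [← hg.2 x y]
  ring

theorem apply_comm (hD : ∀ x, T.degree x ≤ D) (hc : ∀ x u, |c x u| ≤ K)
    (hcs : ∀ x u, c x u = c u x) (hg : T.IsWeightedGreen c z g) (x y : V) : g x y = g y x := by
  -- `g a b = ∑ s, g s b * ((A - z) g(·, a)) s`, which is symmetric in `a, b` because `A` is.
  have key : ∀ a b, g a b =
      ∑' s, g s b * T.weightedAdj c (fun t => g t a) s - z * ∑' s, g s b * g s a := by
    intro a b
    rw [← tsum_mul_left, ← Summable.tsum_sub
      (hasSum_mul_weightedAdj hD hc (hg.1 b) (hg.1 a)).summable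
      (((hg.1 b).summable_mul (hg.1 a)).mul_left z)]
    have hterm : ∀ s, g s b * T.weightedAdj c (fun t => g t a) s - z * (g s b * g s a) =
        if s = a then g a b else 0 := by
      intro s
      rw [weightedAdj_eq hg]
      split_ifs with h
      · subst h; ring
      · ring
    rw [tsum_congr hterm, tsum_ite_eq]
  rw [key x y, key y x, tsum_mul_weightedAdj_comm hD hc hcs (hg.1 y) (hg.1 x)]
  simp only [mul_comm (g _ y)]

theorem apply_self_ne_zero (hD : ∀ x, T.degree x ≤ D) (hc : ∀ x u, |c x u| ≤ K)
    (hcs : ∀ x u, c x u = c u x) (hz : z.im ≠ 0) (hg : T.IsWeightedGreen c z g) (v : V) :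
    g v v ≠ 0 := by
  intro h0
  have hcol : (fun x => g x v) = 0 :=
    eq_zero_of_im_tsum_conj_mul_eq_zero hD hc hcs hz (hg.1 v) <| by
      simp only [fun x => hg.2 x v, mul_ite, mul_one, mul_zero, tsum_ite_eq, h0, map_zero,
        Complex.zero_im]
  simpa [hcol, h0] using hg.2 v v

theorem apply_eq_zero_of_forall_adj_mem_iff (hD : ∀ x, T.degree x ≤ D)
    (hc : ∀ x u, |c x u| ≤ K) (hcs : ∀ x u, c x u = c u x) (hz : z.im ≠ 0)
    (hg : T.IsWeightedGreen c z g) {S : Set V}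
    (hS : ∀ x u, T.Adj x u → c x u ≠ 0 → (x ∈ S ↔ u ∈ S)) {v : V} (hv : v ∉ S)
    {x : V} (hx : x ∈ S) : g x v = 0 := by
  set f := S.indicator fun s => g s v
  have hf : Memℓp f 2 := (hg.1 v).mono' fun i => norm_indicator_le_norm_self _ _
  have hharm : ∀ y, T.weightedAdj c f y = z * f y := by
    intro y
    by_cases hy : y ∈ S
    · have hyv : y ≠ v := fun h => hv (h ▸ hy)
      have hterm : ∀ u ∈ T.neighborFinset y, (c y u : ℂ) * f u = c y u * g u v := by
        intro u hu
        by_cases hcu : c y u = 0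
        · simp [hcu]
        · simp [f, (hS y u ((T.mem_neighborFinset y u).1 hu) hcu).1 hy]
      rw [weightedAdj_apply, sum_congr rfl hterm, ← weightedAdj_apply, weightedAdj_eq hg,
        if_neg hyv, add_zero]
      simp [f, hy]
    · have hterm : ∀ u ∈ T.neighborFinset y, (c y u : ℂ) * f u = 0 := by
        intro u hu
        by_cases hcu : c y u = 0
        · simp [hcu]
        · simp [f, mt (hS y u ((T.mem_neighborFinset y u).1 hu) hcu).2 hy]
      rw [weightedAdj_apply, sum_eq_zero hterm]
      simp [f, hy]
  simpa [f, hx] using congrFun (eq_zero_of_weightedAdj_eq_mul hD hc hcs hz hf hharm) x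

theorem apply_eq_zero_of_isBridge (hD : ∀ x, T.degree x ≤ D) (hc : ∀ x u, |c x u| ≤ K)
    (hcs : ∀ x u, c x u = c u x) (hz : z.im ≠ 0) {v w : V} (hvw : T.IsBridge s(v, w))
    (hg : T.IsWeightedGreen (deleteEdgeWeight c v w) z g) : g w v = 0 := by
  refine hg.apply_eq_zero_of_forall_adj_mem_iff hD (abs_deleteEdgeWeight_le hc v w)
    (deleteEdgeWeight_symm hcs v w) hz (S := {x | (T.deleteEdges {s(v, w)}).Reachable w x})
    (fun x u hxu hc' => ?_) (fun h => isBridge_iff.1 hvw h.symm) (Reachable.refl w)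
  have hadj : (T.deleteEdges {s(v, w)}).Adj x u := by
    refine deleteEdges_adj.2 ⟨hxu, fun h => hc' ?_⟩
    simp only [deleteEdgeWeight, Set.mem_singleton_iff.1 h, if_true]
  exact ⟨fun h => h.trans hadj.reachable, fun h => h.trans hadj.symm.reachable⟩

theorem eq_add_of_deleteEdgeWeight (hD : ∀ x, T.degree x ≤ D) (hc : ∀ x u, |c x u| ≤ K)
    (hcs : ∀ x u, c x u = c u x) (hz : z.im ≠ 0) {G : V → V → ℂ}
    (hG : T.IsWeightedGreen c z G) {v w : V} (hvw : T.Adj v w)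
    (hg : T.IsWeightedGreen (deleteEdgeWeight c v w) z g) (x y : V) :
    g x y = G x y + c v w * (g x v * G w y + g x w * G v y) := by
  -- Second resolvent identity: `F = g - G - g E G` solves `(A' - z) F = 0`, where
  -- `A - A' = E` is `c v w` times the adjacency matrix of the single edge `vw`.
  set F : V → ℂ := (fun s => g s y) - (fun s => G s y) - (c v w * G w y) • (fun s => g s v) -
    (c v w * G v y) • (fun s => g s w) with hF
  have hFmem : Memℓp F 2 :=
    (((hg.1 y).sub (hG.1 y)).sub ((hg.1 v).const_smul _)).sub ((hg.1 w).const_smul _)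
  have hharm : ∀ t, T.weightedAdj (deleteEdgeWeight c v w) F t = z * F t := by
    intro t
    have hGy := weightedAdj_eq_weightedAdj_deleteEdgeWeight_add hcs hvw (fun s => G s y) t
    rw [weightedAdj_eq hG] at hGy
    simp only [hF, map_sub, map_smul, Pi.sub_apply, Pi.smul_apply, smul_eq_mul,
      weightedAdj_eq hg]
    split_ifs at hGy ⊢ <;> linear_combination hGy
  have := congrFun (eq_zero_of_weightedAdj_eq_mul hD (abs_deleteEdgeWeight_le hc v w)
    (deleteEdgeWeight_symm hcs v w) hz hFmem hharm) x
  simp only [hF, Pi.sub_apply, Pi.smul_apply, smul_eq_mul, Pi.zero_apply] at this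
  linear_combination this

end IsWeightedGreen

end SimpleGraph

theorem IsGreen.isWeightedGreen {V : Type*} [DecidableEq V] {T : SimpleGraph V} [T.LocallyFinite]
    {z : ℂ} {g : V → V → ℂ} (h : IsGreen T z g) : T.IsWeightedGreen 1 z g :=
  ⟨fun y => memℓp_two_iff.2 (h.1 y), fun x y => by
    simpa [SimpleGraph.weightedAdj_apply] using h.2 x y⟩

theorem IsGreenDel.isWeightedGreen {V : Type*} [DecidableEq V] {T : SimpleGraph V}
    [T.LocallyFinite] {a b : V} {z : ℂ} {g : V → V → ℂ} (h : IsGreenDel T a b z g) :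
    T.IsWeightedGreen (SimpleGraph.deleteEdgeWeight 1 a b) z g := by
  refine ⟨fun y => memℓp_two_iff.2 (h.1 y), fun x y => ?_⟩
  convert h.2 x y using 2
  refine sum_congr rfl fun u _ => ?_
  simp only [SimpleGraph.deleteEdgeWeight, Sym2.eq_iff, Pi.one_apply]
  split_ifs <;> simp

/-- Lemma, reversal identities: on the universal covering tree,
for any neighbours `v, w`:
`ζ^z(w,v) = (m^z(w)/m^z(v)) ζ^z(v,w)` and `1/ζ^z(w,v) - ζ^z(v,w) = 2m^z(v)`. -/
theorem green_reversal {V : Type*} [DecidableEq V]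
    (T : SimpleGraph V) [T.LocallyFinite] (htree : T.IsTree)
    (D : ℕ) (hdeg : ∀ v : V, 2 ≤ T.degree v ∧ T.degree v ≤ D)
    (z : ℂ) (hz : z.im ≠ 0)
    (Gr : V → V → ℂ) (hGr : IsGreen T z Gr)
    (gdel : V → V → V → V → ℂ)
    (hgdel : ∀ a b : V, T.Adj a b → IsGreenDel T a b z (gdel a b))
    (zeta : V → V → ℂ) (hzeta : ∀ a b : V, zeta a b = - gdel a b b b)
    (twoM : V → ℂ) (htwoM : ∀ v : V, twoM v = - (Gr v v)⁻¹) :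
    ∀ v w : V, T.Adj v w →
      zeta w v = (twoM w / twoM v) * zeta v w ∧
      (zeta w v)⁻¹ - zeta v w = twoM v := by
  intro v w hvw
  have hD : ∀ x, T.degree x ≤ D := fun x => (hdeg x).2
  have hc : ∀ x u : V, |(1 : V → V → ℝ) x u| ≤ 1 := by simp
  have hcs : ∀ x u : V, (1 : V → V → ℝ) x u = (1 : V → V → ℝ) u x := fun _ _ => rfl
  have hG := hGr.isWeightedGreen
  have hbr := SimpleGraph.isAcyclic_iff_forall_adj_isBridge.1 htree.isAcyclic hvw
  have hg := (hgdel v w hvw).isWeightedGreen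
  have hg' := (hgdel w v hvw.symm).isWeightedGreen
  have hgwv := hg.apply_eq_zero_of_isBridge hD hc hcs hz hbr
  have hg'vw := hg'.apply_eq_zero_of_isBridge hD hc hcs hz (Sym2.eq_swap ▸ hbr)
  have hres_wv := hG.eq_add_of_deleteEdgeWeight hD hc hcs hz hvw hg w v
  have hres'_vw := hG.eq_add_of_deleteEdgeWeight hD hc hcs hz hvw.symm hg' v w
  have hres'_vv := hG.eq_add_of_deleteEdgeWeight hD hc hcs hz hvw.symm hg' v v
  have hsymm := hG.apply_comm hD hc hcs v w
  have hv := hG.apply_self_ne_zero hD hc hcs hz v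
  have hw := hG.apply_self_ne_zero hD hc hcs hz w
  simp only [Pi.one_apply, Complex.ofReal_one, one_mul, hgwv, hg'vw, zero_mul, zero_add]
    at hres_wv hres'_vw hres'_vv
  have hq : gdel w v v v ≠ 0 := fun h => hv <| by
    rw [h] at hres'_vv
    linear_combination -hres'_vv
  rw [hzeta, hzeta, htwoM, htwoM]
  constructor
  · field_simp
    linear_combination hres'_vw - hres_wv + hsymm
  · field_simp
    linear_combination hres'_vv - gdel w v v v * hres_wv
end

section
/- Determinant identity (non-regular Ihara-type formula): for a finite graph G with degrees ≥ 2 and z ∈ ℂ∖ℝ, ∏_{e∈E}(−G^z(e)) · det((ζ^z)^{−1}I^{|B|} − B) = det(zI^{|V|} − A) · ∏_{x∈V}(−G^z(x)), where B is the non-backtracking adjacency operator on ℂ^B, ζ^z acts as multiplication by e ↦ ζ^z(o(e),t(e)), G^z(x) = G(x̃,x̃;z) and G^z(e) = G(w̃,ṽ;z) for e = (w,v) (invariant under edge reversal), with Green functions taken on the universal covering tree. -/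
/-!
Let `S` and `T` be the incidence matrices sending a dart to its origin and to its terminus.
Then `S T = B + J`, where `J` is the reversal of darts, so `ζ⁻¹ - B = P - S T` with
`P = ζ⁻¹ + J` block diagonal over the edges; its `2 × 2` blocks have an explicit inverse `Q`.
Sylvester's identity gives `det (P - S T) · det Q = det (1 - T Q S)`. The tree equations at a
vertex `v` with neighbour `u` give `1 - ζ(u,v) ζ(v,u) = 2 m(v) ζ(u,v)`; with this, `1 - T Q S`
becomes `(2m)⁻¹ (z - A)` and the block determinants of `Q` become the edge factors `-G^z(e)`.
-/

open Finset Matrix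

/-- The non-backtracking adjacency matrix: `Bmat e e' = 1` iff `e' ⇝ e`,
i.e. `t(e') = o(e)` and `e` is not the reverse of `e'`. -/
noncomputable def Bmat {V : Type*} [Fintype V] [DecidableEq V]
    (G : SimpleGraph V) [DecidableRel G.Adj] : Matrix G.Dart G.Dart ℂ :=
  fun e e' => if e'.snd = e.fst ∧ e'.symm ≠ e then 1 else 0

theorem Matrix.det_sub_mul_mul_det_of_mul_eq_one {m n R : Type*} [Fintype m] [DecidableEq m]
    [Fintype n] [DecidableEq n] [CommRing R] {P Q : Matrix m m R} (hPQ : P * Q = 1)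
    (S : Matrix m n R) (T : Matrix n m R) : (P - S * T).det * Q.det = (1 - T * Q * S).det := by
  rw [← det_mul, Matrix.sub_mul, hPQ, Matrix.mul_assoc, det_one_sub_mul_comm, Matrix.mul_assoc]

namespace SimpleGraph

variable {V : Type*} (G : SimpleGraph V)

section Orientation

noncomputable def edgeSetDart (ε : G.edgeSet) : G.Dart :=
  ⟨ε.1.out, by rw [← mem_edgeSet, Sym2.mk, Quot.out_eq]; exact ε.2⟩

theorem edge_edgeSetDart (ε : G.edgeSet) : (G.edgeSetDart ε).edge = ε :=
  Quot.out_eq _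

variable [DecidableEq V]

noncomputable def finTwoProdEdgeSetEquivDart : Fin 2 × G.edgeSet ≃ G.Dart where
  toFun p := ![G.edgeSetDart p.2, (G.edgeSetDart p.2).symm] p.1
  invFun d :=
    (if G.edgeSetDart ⟨d.edge, d.edge_mem⟩ = d then 0 else 1, ⟨d.edge, d.edge_mem⟩)
  left_inv := by
    rintro ⟨i, ε⟩
    have hε : (⟨(G.edgeSetDart ε).edge, (G.edgeSetDart ε).edge_mem⟩ : G.edgeSet) = ε :=
      Subtype.ext (G.edge_edgeSetDart ε)
    fin_cases i <;> simp [Dart.edge_symm, hε, (G.edgeSetDart ε).symm_ne.symm]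
  right_inv d := by
    obtain h | h := (dart_edge_eq_iff _ d).mp (G.edge_edgeSetDart ⟨d.edge, d.edge_mem⟩)
    · simp [h]
    · simp [h, d.symm_ne]

theorem edge_finTwoProdEdgeSetEquivDart (p : Fin 2 × G.edgeSet) :
    (G.finTwoProdEdgeSetEquivDart p).edge = p.2 := by
  obtain ⟨i, ε⟩ := p
  fin_cases i <;> simp [finTwoProdEdgeSetEquivDart, Dart.edge_symm, edge_edgeSetDart]

end Orientation

section EdgeBlock

variable {R : Type*} [CommRing R] [DecidableEq V]

def edgeBlockMatrix (a b : V → V → R) : Matrix G.Dart G.Dart R :=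
  of fun e e' => (if e' = e then a e.fst e.snd else 0) + if e' = e.symm then b e.fst e.snd else 0

theorem edgeBlockMatrix_eq_one {a b : V → V → R} (ha : ∀ x y, G.Adj x y → a x y = 1)
    (hb : ∀ x y, G.Adj x y → b x y = 0) : G.edgeBlockMatrix a b = 1 := by
  ext e e'
  simp only [edgeBlockMatrix, of_apply, hb _ _ e.adj, ha _ _ e.adj, ite_self, add_zero,
    one_apply, eq_comm]

theorem edgeBlockMatrix_submatrix_finTwoProdEdgeSetEquivDart (a b : V → V → R) :
    (G.edgeBlockMatrix a b).submatrix G.finTwoProdEdgeSetEquivDart G.finTwoProdEdgeSetEquivDart =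
      blockDiagonal fun ε =>
        let d := G.edgeSetDart ε
        !![a d.fst d.snd, b d.fst d.snd; b d.snd d.fst, a d.snd d.fst] := by
  ext ⟨i, ε⟩ ⟨j, ε'⟩
  by_cases hε : ε = ε'
  · subst hε
    have := (G.edgeSetDart ε).symm_ne
    fin_cases i <;> fin_cases j <;>
      simp [edgeBlockMatrix, finTwoProdEdgeSetEquivDart, this, this.symm]
  · have hne : ∀ d d' : G.Dart, d.edge = ε → d'.edge = ε' → d' ≠ d := by
      intro d d' hd hd' h
      exact hε (Subtype.ext (hd.symm.trans (h ▸ hd')))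
    simp only [submatrix_apply, edgeBlockMatrix, of_apply, blockDiagonal_apply, hε, if_false]
    rw [if_neg (hne _ _ (edge_finTwoProdEdgeSetEquivDart ..) (edge_finTwoProdEdgeSetEquivDart ..)),
      if_neg (hne _ _ (by rw [Dart.edge_symm, edge_finTwoProdEdgeSetEquivDart])
        (edge_finTwoProdEdgeSetEquivDart ..)), add_zero]

variable [Fintype V] [DecidableRel G.Adj]

theorem edgeBlockMatrix_mul_edgeBlockMatrix (a b c d : V → V → R) :
    G.edgeBlockMatrix a b * G.edgeBlockMatrix c d =
      G.edgeBlockMatrix (fun x y => a x y * c x y + b x y * d y x)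
        (fun x y => a x y * d x y + b x y * c y x) := by
  ext e e'
  simp only [mul_apply, edgeBlockMatrix, of_apply, add_mul, ite_mul, zero_mul, sum_add_distrib,
    sum_ite_eq', mem_univ, if_true, Dart.symm_symm]
  by_cases h : e' = e
  · subst h
    simp [e'.symm_ne.symm]
  · by_cases h' : e' = e.symm
    · subst h'
      simp [e.symm_ne]
    · simp [h, h']

theorem edgeBlockMatrix_inv_mul_eq_one {K : Type*} [Field K] {a : V → V → K}
    (ha : ∀ x y, G.Adj x y → a x y ≠ 0)
    (hD : ∀ x y, G.Adj x y → 1 - a x y * a y x ≠ 0) :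
    G.edgeBlockMatrix (fun x y => (a x y)⁻¹) (fun _ _ => 1) *
        G.edgeBlockMatrix (fun x y => a x y / (1 - a x y * a y x))
          (fun x y => -(a x y * a y x) / (1 - a x y * a y x)) = 1 := by
  rw [edgeBlockMatrix_mul_edgeBlockMatrix]
  apply edgeBlockMatrix_eq_one <;> intro x y hxy <;>
  · have := ha x y hxy
    have := hD x y hxy
    rw [mul_comm (a y x)]
    field_simp
    ring

theorem det_edgeBlockMatrix (a b : V → V → R) (f : Sym2 V → R)
    (hf : ∀ d : G.Dart,
      f d.edge = a d.fst d.snd * a d.snd d.fst - b d.fst d.snd * b d.snd d.fst) :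
    (G.edgeBlockMatrix a b).det = ∏ ε ∈ G.edgeFinset, f ε := by
  rw [← det_submatrix_equiv_self G.finTwoProdEdgeSetEquivDart,
    edgeBlockMatrix_submatrix_finTwoProdEdgeSetEquivDart, det_blockDiagonal, edgeFinset,
    ← prod_set_coe]
  refine Fintype.prod_congr _ _ fun ε => ?_
  rw [det_fin_two_of, ← hf, edge_edgeSetDart]

end EdgeBlock

section Incidence

variable (R : Type*) [CommRing R] [DecidableEq V]

def dartFstIncMatrix : Matrix G.Dart V R := of fun e v => if e.fst = v then 1 else 0

def dartSndIncMatrix : Matrix V G.Dart R := of fun v e => if e.snd = v then 1 else 0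

variable [Fintype V]

theorem dartFstIncMatrix_mul_dartSndIncMatrix_apply (e e' : G.Dart) :
    (G.dartFstIncMatrix R * G.dartSndIncMatrix R) e e' = if e'.snd = e.fst then 1 else 0 := by
  simp [mul_apply, dartFstIncMatrix, dartSndIncMatrix, eq_comm]

variable {R} [DecidableRel G.Adj]

theorem sum_dart_snd_eq_sum_neighborFinset_s18 (v : V) (g : V → R) :
    ∑ e : G.Dart, (if e.snd = v then g e.fst else 0) = ∑ u ∈ G.neighborFinset v, g u := by
  rw [← sum_filter]
  refine sum_bij' (fun e _ => e.fst)
    (fun u hu => ⟨(u, v), ((G.mem_neighborFinset v u).mp hu).symm⟩) ?_ ?_ ?_ ?_ ?_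
  · intro e he
    rw [(mem_filter.mp he).2.symm]
    exact (G.mem_neighborFinset _ _).mpr e.adj.symm
  · simp
  · intro e he
    exact Dart.ext _ _ (Prod.ext rfl (mem_filter.mp he).2.symm)
  all_goals intros; rfl

theorem dartSndIncMatrix_mul_edgeBlockMatrix_mul_dartFstIncMatrix_apply (a b : V → V → R)
    (v w : V) :
    (G.dartSndIncMatrix R * G.edgeBlockMatrix a b * G.dartFstIncMatrix R) v w =
      (if G.Adj w v then a w v else 0) +
        if v = w then ∑ u ∈ G.neighborFinset v, b u v else 0 := by
  have hMS : ∀ e : G.Dart, (G.edgeBlockMatrix a b * G.dartFstIncMatrix R) e w =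
      (if e.fst = w then a e.fst e.snd else 0) + if e.snd = w then b e.fst e.snd else 0 := by
    intro e
    simp only [mul_apply, edgeBlockMatrix, dartFstIncMatrix, of_apply, add_mul, ite_mul, zero_mul,
      sum_add_distrib, sum_ite_eq', mem_univ, if_true]
    simp only [mul_ite, mul_one, mul_zero, Dart.symm_toProd, Prod.fst_swap]
  rw [Matrix.mul_assoc, mul_apply]
  simp only [hMS, dartSndIncMatrix, of_apply, ite_mul, one_mul, zero_mul]
  calc _ = ∑ e : G.Dart, if e.snd = v then
          (if e.fst = w then a e.fst v else 0) + (if v = w then b e.fst v else 0) else 0 :=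
        sum_congr rfl fun e _ => by split_ifs <;> simp_all
    _ = _ := by
      rw [G.sum_dart_snd_eq_sum_neighborFinset_s18 v
          fun u => (if u = w then a u v else 0) + if v = w then b u v else 0, sum_add_distrib,
        sum_ite_eq']
      simp only [mem_neighborFinset, adj_comm, sum_ite_irrel, sum_const_zero]

theorem diagonal_sub_Bmat (a : V → V → ℂ) :
    diagonal (fun e : G.Dart => a e.fst e.snd) - Bmat G =
      G.edgeBlockMatrix a (fun _ _ => 1) - G.dartFstIncMatrix ℂ * G.dartSndIncMatrix ℂ := by
  ext e e'
  rw [Matrix.sub_apply, Matrix.sub_apply, dartFstIncMatrix_mul_dartSndIncMatrix_apply]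
  by_cases h : e' = e
  · subst h
    simp [Bmat, edgeBlockMatrix, e'.snd_ne_fst, e'.symm_ne.symm]
  · by_cases h' : e' = e.symm
    · subst h'
      simp [Bmat, edgeBlockMatrix, e.symm_ne, diagonal_apply_ne _ e.symm_ne.symm]
    · have h'' : e'.symm ≠ e := fun h'' => h' (by rw [← h'', Dart.symm_symm])
      simp [Bmat, edgeBlockMatrix, h, h', h'', diagonal_apply_ne _ (Ne.symm h)]

end Incidence

structure IsTreeGreenSystem [Fintype V] [DecidableEq V] [DecidableRel G.Adj]
    (z : ℂ) (zeta : V → V → ℂ) (m : V → ℂ) : Prop where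
  zeta_ne_zero : ∀ v w, G.Adj v w → zeta v w ≠ 0
  eq_sum_add : ∀ v, z = (∑ u ∈ G.neighborFinset v, zeta v u) + 2 * m v
  eq_sum_erase_add_inv : ∀ v w, G.Adj v w →
    z = (∑ u ∈ (G.neighborFinset v).erase w, zeta v u) + (zeta w v)⁻¹

namespace IsTreeGreenSystem

variable {G} [Fintype V] [DecidableEq V] [DecidableRel G.Adj]
  {z : ℂ} {zeta : V → V → ℂ} {m : V → ℂ}

theorem one_sub_mul_eq (hG : G.IsTreeGreenSystem z zeta m) {u v : V} (huv : G.Adj u v) :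
    1 - zeta u v * zeta v u = 2 * m v * zeta u v := by
  have hsplit := add_sum_erase (G.neighborFinset v) (zeta v)
    ((G.mem_neighborFinset v u).mpr huv.symm)
  have hinv : zeta v u + 2 * m v = (zeta u v)⁻¹ := by
    linear_combination hsplit - (hG.eq_sum_erase_add_inv v u huv.symm).symm.trans (hG.eq_sum_add v)
  have := hG.zeta_ne_zero u v huv
  field_simp at hinv
  linear_combination -hinv

theorem one_sub_mul_ne_zero (hG : G.IsTreeGreenSystem z zeta m) (hm : ∀ v, m v ≠ 0) {u v : V}
    (huv : G.Adj u v) : 1 - zeta u v * zeta v u ≠ 0 := by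
  rw [hG.one_sub_mul_eq huv]
  exact mul_ne_zero (mul_ne_zero two_ne_zero (hm v)) (hG.zeta_ne_zero u v huv)

theorem det_edgeBlockMatrix (hG : G.IsTreeGreenSystem z zeta m) (hm : ∀ v, m v ≠ 0) :
    (G.edgeBlockMatrix (fun x y => zeta x y / (1 - zeta x y * zeta y x))
        (fun x y => -(zeta x y * zeta y x) / (1 - zeta x y * zeta y x))).det =
      ∏ ε ∈ G.edgeFinset,
        Sym2.lift ⟨fun x y => (2 * m x)⁻¹ * (2 * m y)⁻¹ * (1 - zeta x y * zeta y x),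
          by intro a b; ring⟩ ε := by
  refine G.det_edgeBlockMatrix _ _ _ fun ⟨⟨x, y⟩, hxy⟩ => ?_
  have := hm x
  have := hm y
  have := hG.zeta_ne_zero x y hxy
  have := hG.zeta_ne_zero y x hxy.symm
  simp only [Dart.edge, Sym2.lift_mk]
  rw [hG.one_sub_mul_eq hxy, hG.one_sub_mul_eq hxy.symm]
  field_simp
  exact (hG.one_sub_mul_eq hxy).symm

theorem one_sub_dartSndIncMatrix_mul_mul_dartFstIncMatrix (hG : G.IsTreeGreenSystem z zeta m)
    (hm : ∀ v, m v ≠ 0) :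
    1 - G.dartSndIncMatrix ℂ * G.edgeBlockMatrix
          (fun x y => zeta x y / (1 - zeta x y * zeta y x))
          (fun x y => -(zeta x y * zeta y x) / (1 - zeta x y * zeta y x)) *
        G.dartFstIncMatrix ℂ =
      diagonal (fun v => (2 * m v)⁻¹) * (z • (1 : Matrix V V ℂ) - G.adjMatrix ℂ) := by
  ext v w
  rw [Matrix.sub_apply, dartSndIncMatrix_mul_edgeBlockMatrix_mul_dartFstIncMatrix_apply,
    diagonal_mul, Matrix.sub_apply, Matrix.smul_apply, adjMatrix_apply, smul_eq_mul]
  have := hm v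
  by_cases hvw : v = w
  · subst hvw
    have hterm : ∀ u ∈ G.neighborFinset v,
        -(zeta u v * zeta v u) / (1 - zeta u v * zeta v u) = -(zeta v u / (2 * m v)) := by
      intro u hu
      have huv := ((G.mem_neighborFinset v u).mp hu).symm
      have := hG.zeta_ne_zero u v huv
      rw [hG.one_sub_mul_eq huv]
      field_simp
    simp only [G.irrefl, if_false, if_true, one_apply_eq, zero_add, mul_one]
    rw [sum_congr rfl hterm, sum_neg_distrib, ← sum_div, eq_sub_of_add_eq (hG.eq_sum_add v).symm]
    field_simp
    ring
  · rw [one_apply_ne hvw]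
    by_cases hadj : G.Adj v w
    · simp only [hadj, hadj.symm, hvw, if_true, if_false, add_zero]
      have := hG.zeta_ne_zero w v hadj.symm
      rw [hG.one_sub_mul_eq hadj.symm]
      field_simp
      ring
    · have hadj' : ¬G.Adj w v := fun h => hadj h.symm
      simp [hadj, hadj', hvw]

end IsTreeGreenSystem

end SimpleGraph

open SimpleGraph in
/-- Theorem 3, non-regular Ihara-type determinant formula:
`∏_{e∈E}(-G^z(e)) · det((ζ^z)⁻¹ I - B) = det(zI - A) · ∏_{x∈V}(-G^z(x))`,
for any weights `ζ^z, m^z` satisfying the algebraic system of the Green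
functions of the universal covering tree, where `G^z(x) = -1/(2m^z(x))` and,
for an edge `{x,y}`, `-G^z(x,y) = (2m(x))⁻¹(2m(y))⁻¹(1 - ζ(x,y)ζ(y,x))`. -/
theorem ihara_type_determinant {V : Type*} [Fintype V] [DecidableEq V]
    (G : SimpleGraph V) [DecidableRel G.Adj]
    (z : ℂ)
    (zeta : V → V → ℂ) (m : V → ℂ)
    (hm : ∀ v : V, m v ≠ 0)
    (hzne : ∀ v w : V, G.Adj v w → zeta v w ≠ 0)
    (h1 : ∀ v : V, z = (∑ u ∈ G.neighborFinset v, zeta v u) + 2 * m v)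
    (h2 : ∀ v w : V, G.Adj v w →
      z = (∑ u ∈ (G.neighborFinset v).erase w, zeta v u) + (zeta w v)⁻¹) :
    (∏ ε ∈ G.edgeFinset,
        Sym2.lift ⟨fun x y => (2 * m x)⁻¹ * (2 * m y)⁻¹ * (1 - zeta x y * zeta y x),
          by intro a b; ring⟩ ε) *
      (Matrix.diagonal (fun e : G.Dart => (zeta e.fst e.snd)⁻¹) - Bmat G).det =
    (z • (1 : Matrix V V ℂ) - G.adjMatrix ℂ).det * ∏ x : V, (2 * m x)⁻¹ := by
  have hG : G.IsTreeGreenSystem z zeta m := ⟨hzne, h1, h2⟩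
  have hPQ := G.edgeBlockMatrix_inv_mul_eq_one hzne fun x y => hG.one_sub_mul_ne_zero hm
  rw [G.diagonal_sub_Bmat fun x y => (zeta x y)⁻¹, ← hG.det_edgeBlockMatrix hm, mul_comm,
    det_sub_mul_mul_det_of_mul_eq_one hPQ, hG.one_sub_dartSndIncMatrix_mul_mul_dartFstIncMatrix hm,
    det_mul, det_diagonal, mul_comm]
end
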